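/- arXiv:1505.04383 — 8 statements merged into one kernel-verified Lean document; each statement's English description precedes it below -/
import Mathlib

section
/- Let P : {-1,1}^k → {0,1} be a predicate and 0 < δ < 1, and let 2 ≤ t ≤ k. Then P is δ-far from supporting a t-wise uniform distribution if and only if there exists a multilinear polynomial Q : {-1,1}^k → ℝ of degree at most t that δ-separates P. -/
/-!
Both sides are the alternatives of Farkas' lemma for one linear program. The indicator of the
subcube `{z | z = y on T}` expands as `2⁻ᵗ ∑_{s ⊆ T} χ_s(z) χ_s(y)` and the characters are
orthogonal, so a probability vector `D` is `t`-wise uniform iff `∑_z D z χ_S z = 0` whenever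
`1 ≤ |S| ≤ t`. In Gale's form, Farkas' lemma gives either coefficients `a` with
`∑_S a_S χ_S ≤ 1_{P = 0} - δ` pointwise, so that `Q = -∑_S a_S χ_S` separates `P`, or some
`y ≥ 0` orthogonal to the low-degree characters with `⟨1_{P = 0} - δ, y⟩ < 0`, which normalised
is a `t`-wise uniform distribution with mass `< δ` on `P⁻¹(0)`. Conversely `E_D Q = 0` for every
`t`-wise uniform `D`, and the pointwise bounds on `Q` then force mass `≥ δ`. Farkas' lemma needs
finitely generated cones to be closed, which follows from Carathéodory's theorem for cones.
-/

open Finset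

section ConicHull

variable {ι E : Type*} [AddCommGroup E] [Module ℝ E]

def conicHull (g : ι → E) (s : Finset ι) : Set E :=
  {x | ∃ c : ι → ℝ, (∀ i ∈ s, 0 ≤ c i) ∧ ∑ i ∈ s, c i • g i = x}

lemma conicHull_mono {g : ι → E} {s u : Finset ι} (h : u ⊆ s) :
    conicHull g u ⊆ conicHull g s := by
  classical
  rintro x ⟨c, hc, rfl⟩
  refine ⟨fun i => if i ∈ u then c i else 0, fun i _ => ?_, ?_⟩
  · dsimp only
    split_ifs with hi
    exacts [hc i hi, le_rfl]
  · simp_rw [ite_smul, zero_smul, sum_ite_mem, inter_eq_right.2 h]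

lemma exists_pos_of_not_linearIndepOn {g : ι → E} {s : Finset ι}
    (h : ¬LinearIndepOn ℝ g (s : Set ι)) :
    ∃ d : ι → ℝ, ∑ i ∈ s, d i • g i = 0 ∧ ∃ j ∈ s, 0 < d j := by
  obtain ⟨d, hd, j, hj, hdj⟩ := not_linearIndepOn_finset_iff.1 h
  rcases hdj.lt_or_gt with hneg | hpos
  · exact ⟨-d, by simp [neg_smul, hd], j, hj, by simpa using hneg⟩
  · exact ⟨d, hd, j, hj, hpos⟩

lemma mem_hull_range_iff_mem_conicHull [Fintype ι] {g : ι → E} {x : E} :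
    x ∈ PointedCone.hull ℝ (Set.range g) ↔ x ∈ conicHull g univ := by
  rw [Submodule.mem_span_range_iff_exists_fun]
  constructor
  · rintro ⟨c, rfl⟩
    exact ⟨fun i => c i, fun i _ => (c i).2, rfl⟩
  · rintro ⟨c, hc, rfl⟩
    exact ⟨fun i => ⟨c i, hc i (mem_univ i)⟩, rfl⟩

lemma exists_mem_conicHull_erase [DecidableEq ι] {g : ι → E} {s : Finset ι} {x : E}
    (h : ¬LinearIndepOn ℝ g (s : Set ι)) (hx : x ∈ conicHull g s) :
    ∃ i ∈ s, x ∈ conicHull g (s.erase i) := by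
  obtain ⟨c, hc, rfl⟩ := hx
  obtain ⟨d, hd, j, hj, hdj⟩ := exists_pos_of_not_linearIndepOn h
  -- move from `c` along `-d` until the first coefficient vanishes
  obtain ⟨i₀, hi₀, hmin⟩ := (s.filter (0 < d ·)).exists_min_image (fun i => c i / d i)
    ⟨j, mem_filter.2 ⟨hj, hdj⟩⟩
  rw [mem_filter] at hi₀
  set θ := c i₀ / d i₀
  have hθ : 0 ≤ θ := div_nonneg (hc _ hi₀.1) hi₀.2.le
  have hnonneg : ∀ i ∈ s, 0 ≤ c i - θ * d i := by
    intro i hi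
    rcases le_or_gt (d i) 0 with hdi | hdi
    · nlinarith [hc i hi]
    · have := hmin i (mem_filter.2 ⟨hi, hdi⟩)
      rw [le_div_iff₀ hdi] at this
      linarith
  have hzero : c i₀ - θ * d i₀ = 0 := by rw [div_mul_cancel₀ _ hi₀.2.ne', sub_self]
  refine ⟨i₀, hi₀.1, fun i => c i - θ * d i, fun i hi => hnonneg i (mem_of_mem_erase hi),
    ?_⟩
  rw [sum_erase _ (by simp only [hzero, zero_smul])]
  simp only [sub_smul, mul_smul, sum_sub_distrib, ← smul_sum, hd, smul_zero, sub_zero]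

theorem exists_linearIndepOn_of_mem_conicHull [DecidableEq ι] {g : ι → E} {s : Finset ι}
    {x : E} (hx : x ∈ conicHull g s) :
    ∃ u ⊆ s, LinearIndepOn ℝ g (u : Set ι) ∧ x ∈ conicHull g u := by
  induction s using Finset.strongInduction with
  | H s ih =>
    by_cases h : LinearIndepOn ℝ g (s : Set ι)
    · exact ⟨s, subset_rfl, h, hx⟩
    · obtain ⟨i, hi, hx'⟩ := exists_mem_conicHull_erase h hx
      obtain ⟨u, hu, hind, hxu⟩ := ih _ (erase_ssubset hi) hx'
      exact ⟨u, hu.trans (erase_subset i s), hind, hxu⟩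

variable [TopologicalSpace E] [IsTopologicalAddGroup E] [ContinuousSMul ℝ E] [T2Space E]

lemma isClosed_conicHull_of_linearIndepOn {g : ι → E} {u : Finset ι}
    (h : LinearIndepOn ℝ g (u : Set ι)) : IsClosed (conicHull g u) := by
  classical
  set φ := Fintype.linearCombination ℝ (fun i : u => g i)
  have hφ : Topology.IsClosedEmbedding φ := LinearMap.isClosedEmbedding_of_injective
    (LinearMap.ker_eq_bot.2 h.fintypeLinearCombination_injective)
  have himage : conicHull g u = φ '' Set.Ici 0 := by
    ext x
    constructor
    · rintro ⟨c, hc, rfl⟩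
      refine ⟨fun i => c i, fun i => hc i i.2, ?_⟩
      simp [φ, Fintype.linearCombination_apply, sum_attach u (fun i => c i • g i)]
    · rintro ⟨c, hc, rfl⟩
      refine ⟨fun i => if hi : i ∈ u then c ⟨i, hi⟩ else 0,
        fun i hi => by simpa [hi] using hc ⟨i, hi⟩, ?_⟩
      rw [← sum_coe_sort u]
      simp [φ, Fintype.linearCombination_apply]
  rw [himage]
  exact hφ.isClosedMap _ isClosed_Ici

theorem isClosed_conicHull (g : ι → E) (s : Finset ι) : IsClosed (conicHull g s) := by
  classical
  have hunion : conicHull g s =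
      ⋃ (u : Finset ι) (_ : u ∈ s.powerset.filter fun u : Finset ι => LinearIndepOn ℝ g u),
        conicHull g u := by
    refine subset_antisymm (fun x hx => ?_) (Set.iUnion₂_subset fun u hu => conicHull_mono ?_)
    · obtain ⟨u, hus, hu, hxu⟩ := exists_linearIndepOn_of_mem_conicHull hx
      exact Set.mem_biUnion (mem_filter.2 ⟨mem_powerset.2 hus, hu⟩) hxu
    · exact mem_powerset.1 (mem_filter.1 hu).1
  rw [hunion]
  exact isClosed_biUnion_finset fun u hu => isClosed_conicHull_of_linearIndepOn (mem_filter.1 hu).2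

variable [LocallyConvexSpace ℝ E] [Fintype ι]

theorem exists_nonneg_sum_smul_eq_or_exists_dual_neg (g : ι → E) (b : E) :
    (∃ c : ι → ℝ, 0 ≤ c ∧ ∑ i, c i • g i = b) ∨
      ∃ f : StrongDual ℝ E, (∀ i, 0 ≤ f (g i)) ∧ f b < 0 := by
  let C : ProperCone ℝ E := ⟨PointedCone.hull ℝ (Set.range g), by
    convert isClosed_conicHull g univ
    exact Set.ext fun x => mem_hull_range_iff_mem_conicHull⟩
  by_cases hb : b ∈ C
  · obtain ⟨c, hc, hcb⟩ := mem_hull_range_iff_mem_conicHull.1 hb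
    exact .inl ⟨c, fun i => hc i (mem_univ i), hcb⟩
  · obtain ⟨f, hf, hfb⟩ := C.hyperplane_separation_point hb
    exact .inr ⟨f, fun i => hf _ (PointedCone.subset_hull ⟨i, rfl⟩), hfb⟩

theorem exists_sum_smul_add_nonneg_sum_smul_eq_or_exists_dual_neg {κ : Type*} [Fintype κ]
    (v : κ → E) (g : ι → E) (b : E) :
    (∃ a : κ → ℝ, ∃ c : ι → ℝ, 0 ≤ c ∧ ∑ j, a j • v j + ∑ i, c i • g i = b) ∨
      ∃ f : StrongDual ℝ E, (∀ j, f (v j) = 0) ∧ (∀ i, 0 ≤ f (g i)) ∧ f b < 0 := by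
  rcases exists_nonneg_sum_smul_eq_or_exists_dual_neg
      (Sum.elim (Sum.elim v (-v)) g) b with ⟨c, hc, hcb⟩ | ⟨f, hf, hfb⟩
  · refine .inl ⟨fun j => c (.inl (.inl j)) - c (.inl (.inr j)), fun i => c (.inr i),
      fun i => hc _, ?_⟩
    rw [← hcb]
    simp only [Fintype.sum_sum_type, Sum.elim_inl, Sum.elim_inr, Pi.neg_apply, smul_neg,
      sum_neg_distrib, sub_eq_add_neg, add_smul, neg_smul, sum_add_distrib]
  · refine .inr ⟨f, fun j => le_antisymm ?_ (hf (.inl (.inl j))), fun i => hf (.inr i), hfb⟩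
    simpa using hf (.inl (.inr j))

end ConicHull

section Fourier

variable {ι : Type*}

def chi (S : Finset ι) (z : ι → Bool) : ℝ :=
  ∏ i ∈ S, if z i then 1 else -1

@[simp] lemma chi_empty (z : ι → Bool) : chi ∅ z = 1 := prod_empty

variable [Fintype ι] [DecidableEq ι]

lemma chi_eq_prod_univ (S : Finset ι) (z : ι → Bool) :
    chi S z = ∏ i, if i ∈ S then (if z i then 1 else -1) else 1 :=
  (Fintype.prod_ite_mem S _).symm

theorem sum_chi_mul_chi (s S : Finset ι) :
    ∑ z, chi s z * chi S z = if s = S then 2 ^ Fintype.card ι else 0 := by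
  let F : ι → Bool → ℝ := fun i b =>
    (if i ∈ s then (if b then 1 else -1) else 1) * (if i ∈ S then (if b then 1 else -1) else 1)
  have hF : ∀ i, ∑ b, F i b = if (i ∈ s ↔ i ∈ S) then 2 else 0 := by
    intro i
    by_cases hs : i ∈ s <;> by_cases hS : i ∈ S <;> norm_num [F, hs, hS]
  calc ∑ z, chi s z * chi S z = ∑ z : ι → Bool, ∏ i, F i (z i) := by
        simp only [F, chi_eq_prod_univ, ← prod_mul_distrib]
    _ = ∏ i, ∑ b, F i b := (Fintype.prod_sum F).symm
    _ = if s = S then 2 ^ Fintype.card ι else 0 := by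
        simp_rw [hF]
        rw [prod_ite_zero]
        simp only [prod_const, card_univ, mem_univ, true_implies, ← Finset.ext_iff]

lemma sum_chi_eq_zero {S : Finset ι} (hS : S.Nonempty) : ∑ z, chi S z = 0 := by
  simpa [hS.ne_empty.symm] using sum_chi_mul_chi ∅ S

theorem indicator_eqOn_eq_sum_chi (T : Finset ι) (y z : ι → Bool) :
    (if ∀ i ∈ T, z i = y i then (1 : ℝ) else 0) =
      (∑ s ∈ T.powerset, chi s z * chi s y) / 2 ^ T.card := by
  have hfactor : ∀ i, (if z i = y i then (1 : ℝ) else 0) =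
      (1 + (if z i then 1 else -1) * (if y i then 1 else -1)) / 2 := by
    intro i
    cases z i <;> cases y i <;> norm_num
  rw [show (if ∀ i ∈ T, z i = y i then (1 : ℝ) else 0) =
      ∏ i ∈ T, if z i = y i then 1 else 0 by rw [prod_boole]; congr]
  simp_rw [hfactor, prod_div_distrib, prod_const, prod_one_add, chi, ← prod_mul_distrib]

theorem sum_filter_eqOn_eq_sum_chi (D : (ι → Bool) → ℝ) (T : Finset ι) (y : ι → Bool) :
    ∑ z ∈ univ.filter (fun z => ∀ i ∈ T, z i = y i), D z =
      (∑ s ∈ T.powerset, chi s y * ∑ z, D z * chi s z) / 2 ^ T.card := by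
  trans ∑ z, D z * (if ∀ i ∈ T, z i = y i then (1 : ℝ) else 0)
  · simp [sum_filter]
  simp_rw [indicator_eqOn_eq_sum_chi, mul_div_assoc', ← sum_div, mul_sum]
  rw [sum_comm]
  congr 1
  exact sum_congr rfl fun s _ => sum_congr rfl fun z _ => by ring

theorem uniformMarginals_iff_sum_mul_chi_eq_zero {t : ℕ} {D : (ι → Bool) → ℝ}
    (hD : ∑ z, D z = 1) (ht : t ≤ Fintype.card ι) :
    (∀ T : Finset ι, T.card = t → ∀ y : ι → Bool,
        ∑ z ∈ univ.filter (fun z => ∀ i ∈ T, z i = y i), D z = 1 / 2 ^ t) ↔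
      ∀ S : Finset ι, S.Nonempty → S.card ≤ t → ∑ z, D z * chi S z = 0 := by
  constructor
  · intro hmarg S hS hSt
    obtain ⟨T, hST, rfl⟩ := exists_superset_card_eq hSt ht
    have hsum := calc
      ∑ y, chi S y * (1 / 2 ^ T.card)
        = ∑ y, chi S y * ∑ z ∈ univ.filter (fun z => ∀ i ∈ T, z i = y i), D z := by
          simp_rw [hmarg T rfl]
      _ = (∑ s ∈ T.powerset, (∑ z, D z * chi s z) * ∑ y, chi S y * chi s y) / 2 ^ T.card := by
          simp_rw [sum_filter_eqOn_eq_sum_chi, mul_div_assoc', ← sum_div, mul_sum, sum_mul]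
          rw [sum_comm]
          congr 1
          refine sum_congr rfl fun s _ => ?_
          exact sum_congr rfl fun z _ => sum_congr rfl fun y _ => by ring
      _ = (∑ z, D z * chi S z) * 2 ^ Fintype.card ι / 2 ^ T.card := by
          simp_rw [sum_chi_mul_chi, mul_ite, mul_zero, sum_ite_eq, mem_powerset.2 hST, if_true]
    rw [← sum_mul, sum_chi_eq_zero hS, zero_mul] at hsum
    simpa using hsum.symm
  · intro hchar T hT y
    rw [sum_filter_eqOn_eq_sum_chi, sum_eq_single_of_mem ∅ (empty_mem_powerset T), hT]
    · simp [hD]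
    · intro s hs hne
      rw [hchar s (nonempty_iff_ne_empty.2 hne) ((card_le_card (mem_powerset.1 hs)).trans hT.le),
        mul_zero]

end Fourier

section Farkas

variable {n κ : Type*} [Fintype n] [Fintype κ]

theorem exists_sum_smul_le_or_exists_nonneg_dotProduct_neg (v : κ → n → ℝ) (b : n → ℝ) :
    (∃ a : κ → ℝ, ∑ j, a j • v j ≤ b) ∨
      ∃ y : n → ℝ, 0 ≤ y ∧ (∀ j, v j ⬝ᵥ y = 0) ∧ b ⬝ᵥ y < 0 := by
  classical
  have hdual : ∀ (f : StrongDual ℝ (n → ℝ)) (u : n → ℝ),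
      f u = u ⬝ᵥ fun x => f (fun x' => if x = x' then 1 else 0) := fun f u =>
    LinearMap.pi_apply_eq_sum_univ (f : (n → ℝ) →ₗ[ℝ] ℝ) u
  rcases exists_sum_smul_add_nonneg_sum_smul_eq_or_exists_dual_neg v
      (fun x x' => if x = x' then 1 else 0) b with ⟨a, c, hc, hb⟩ | ⟨f, hfv, hfe, hfb⟩
  · refine .inl ⟨a, fun x => ?_⟩
    rw [← hb]
    simpa using hc x
  · refine .inr ⟨_, fun x => hfe x, fun j => ?_, ?_⟩
    · rw [← hdual, hfv]
    · rwa [← hdual]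

end Farkas

section Separation

variable {ι : Type*} [Fintype ι] [DecidableEq ι] {t : ℕ} {P : (ι → Bool) → Bool} {δ : ℝ}

theorem le_sum_filter_of_separating {D : (ι → Bool) → ℝ} {Q : Finset ι → ℝ}
    (hD0 : ∀ z, 0 ≤ D z) (hD1 : ∑ z, D z = 1)
    (hD : ∀ S : Finset ι, S.Nonempty → S.card ≤ t → ∑ z, D z * chi S z = 0)
    (hQt : ∀ S : Finset ι, t < S.card → Q S = 0) (hQ0 : Q ∅ = 0)
    (hQ : ∀ z, δ - 1 ≤ ∑ S, Q S * chi S z) (hQP : ∀ z, P z = true → δ ≤ ∑ S, Q S * chi S z) :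
    δ ≤ ∑ z ∈ univ.filter (fun z => P z = false), D z := by
  have hmean : ∑ z, D z * ∑ S, Q S * chi S z = 0 := by
    simp_rw [mul_sum, mul_left_comm (D _)]
    rw [sum_comm]
    refine sum_eq_zero fun S _ => ?_
    rw [← mul_sum]
    rcases S.eq_empty_or_nonempty with rfl | hS
    · rw [hQ0, zero_mul]
    rcases le_or_gt S.card t with hSt | hSt
    · rw [hD S hS hSt, mul_zero]
    · rw [hQt S hSt, zero_mul]
  have hpointwise : ∀ z, D z * (δ - if P z = false then 1 else 0) ≤ D z * ∑ S, Q S * chi S z := by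
    intro z
    refine mul_le_mul_of_nonneg_left ?_ (hD0 z)
    cases hPz : P z
    · simpa using hQ z
    · simpa using hQP z hPz
  have := sum_le_sum fun z (_ : z ∈ univ) => hpointwise z
  simp only [mul_sub, mul_boole, sum_sub_distrib, ← sum_mul, hD1, ← sum_filter, hmean] at this
  linarith

theorem exists_probability_sum_filter_lt_of_dual {y : (ι → Bool) → ℝ} (hy0 : 0 ≤ y)
    (hy : ∀ S : Finset ι, S.Nonempty → S.card ≤ t → ∑ z, y z * chi S z = 0)
    (hyP : ∑ z, ((if P z = false then 1 else 0) - δ) * y z < 0) :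
    ∃ D : (ι → Bool) → ℝ, (∀ z, 0 ≤ D z) ∧ ∑ z, D z = 1 ∧
      (∀ S : Finset ι, S.Nonempty → S.card ≤ t → ∑ z, D z * chi S z = 0) ∧
      ∑ z ∈ univ.filter (fun z => P z = false), D z < δ := by
  set s := ∑ z, y z
  have hs : 0 < s := by
    refine (sum_nonneg fun z _ => hy0 z).lt_of_ne fun hs0 => hyP.ne ?_
    have hy : ∀ z, y z = 0 := fun z =>
      (sum_eq_zero_iff_of_nonneg fun z _ => hy0 z).1 hs0.symm z (mem_univ z)
    simp [hy]
  refine ⟨fun z => y z / s, fun z => div_nonneg (hy0 z) hs.le, by rw [← sum_div, div_self hs.ne'],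
    fun S hS hSt => ?_, ?_⟩
  · simp_rw [div_mul_eq_mul_div, ← sum_div, hy S hS hSt, zero_div]
  · rw [← sum_div, div_lt_iff₀ hs, sum_filter]
    simp only [sub_mul, sum_sub_distrib, boole_mul, ← mul_sum] at hyP
    linarith

theorem exists_separating_of_forall_le
    (hfar : ∀ D : (ι → Bool) → ℝ, (∀ z, 0 ≤ D z) → ∑ z, D z = 1 →
      (∀ S : Finset ι, S.Nonempty → S.card ≤ t → ∑ z, D z * chi S z = 0) →
      δ ≤ ∑ z ∈ univ.filter (fun z => P z = false), D z) :
    ∃ Q : Finset ι → ℝ, (∀ S : Finset ι, t < S.card → Q S = 0) ∧ Q ∅ = 0 ∧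
      (∀ z, δ - 1 ≤ ∑ S, Q S * chi S z) ∧ (∀ z, P z = true → δ ≤ ∑ S, Q S * chi S z) := by
  let v : Finset ι → (ι → Bool) → ℝ := fun S z => if S.Nonempty ∧ S.card ≤ t then chi S z else 0
  let b : (ι → Bool) → ℝ := fun z => (if P z = false then 1 else 0) - δ
  rcases exists_sum_smul_le_or_exists_nonneg_dotProduct_neg v b with ⟨a, ha⟩ | ⟨y, hy0, hyv, hyb⟩
  · let Q : Finset ι → ℝ := fun S => if S.Nonempty ∧ S.card ≤ t then -a S else 0
    have hQ : ∀ z, -b z ≤ ∑ S, Q S * chi S z := by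
      intro z
      have hz : ∑ S, a S * v S z ≤ b z := by simpa using ha z
      have hQv : ∀ S, Q S * chi S z = -(a S * v S z) := fun S => by
        simp only [Q, v]
        split_ifs <;> ring
      simpa only [hQv, sum_neg_distrib] using neg_le_neg hz
    refine ⟨Q, fun S hS => if_neg (by omega), if_neg (by simp), fun z => ?_, fun z hz => ?_⟩
    · have := hQ z
      simp only [b] at this
      split_ifs at this <;> linarith
    · simpa [b, hz] using hQ z
  · have hvS : ∀ S : Finset ι, S.Nonempty → S.card ≤ t → v S = chi S :=
      fun S hS hSt => funext fun z => if_pos ⟨hS, hSt⟩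
    obtain ⟨D, hD0, hD1, hD, hlt⟩ := exists_probability_sum_filter_lt_of_dual hy0
      (fun S hS hSt => by simpa [hvS S hS hSt, dotProduct, mul_comm] using hyv S) hyb
    exact absurd (hfar D hD0 hD1 hD) (not_le.2 hlt)

end Separation

theorem delta_far_iff_separating_poly_general {k t : ℕ} (P : (Fin k → Bool) → Bool)
    (δ : ℝ) (htk : t ≤ k) :
    (∀ D : (Fin k → Bool) → ℝ,
        (∀ z, 0 ≤ D z) → (∑ z, D z = 1) →
        (∀ T : Finset (Fin k), T.card = t → ∀ y : Fin k → Bool,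
          ∑ z ∈ Finset.univ.filter (fun z : Fin k → Bool => ∀ i ∈ T, z i = y i), D z
            = 1 / 2 ^ t) →
        δ ≤ ∑ z ∈ Finset.univ.filter (fun z : Fin k → Bool => P z = false), D z)
    ↔
    (∃ Q : Finset (Fin k) → ℝ,
        (∀ S : Finset (Fin k), t < S.card → Q S = 0) ∧ Q ∅ = 0 ∧
        (∀ z : Fin k → Bool,
          δ - 1 ≤ ∑ S : Finset (Fin k), Q S * ∏ i ∈ S, (if z i then (1:ℝ) else -1)) ∧
        (∀ z : Fin k → Bool, P z = true →
          δ ≤ ∑ S : Finset (Fin k), Q S * ∏ i ∈ S, (if z i then (1:ℝ) else -1))) := by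
  have hunif := fun (D : (Fin k → Bool) → ℝ) (hD : ∑ z, D z = 1) =>
    uniformMarginals_iff_sum_mul_chi_eq_zero hD (by simpa using htk)
  -- `convert` reconciles the instance deciding `∀ i ∈ T, _` over `Fin k` with the general one
  constructor
  · intro hfar
    refine exists_separating_of_forall_le fun D hD0 hD1 hD => hfar D hD0 hD1 ?_
    convert (hunif D hD1).2 hD
  · rintro ⟨Q, hQt, hQ0, hQ, hQP⟩ D hD0 hD1 hmarg
    exact le_sum_filter_of_separating hD0 hD1 ((hunif D hD1).1 (by convert hmarg)) hQt hQ0 hQ hQP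

/-- LP duality characterization: for a predicate `P : {-1,1}^k → {0,1}`,
`0 < δ < 1` and `2 ≤ t ≤ k`, `P` is δ-far from supporting a t-wise uniform distribution
(every t-wise uniform distribution puts mass ≥ δ on `P⁻¹(0)`) if and only if there is a
multilinear polynomial `Q` of degree ≤ t (given by its Fourier coefficients), with zero
constant coefficient, satisfying `Q(z) ≥ δ - 1` everywhere and `Q(z) ≥ δ` on `P⁻¹(1)`. -/
theorem delta_far_iff_separating_poly {k t : ℕ} (P : (Fin k → Bool) → Bool)
    (δ : ℝ) (hδ0 : 0 < δ) (hδ1 : δ < 1) (ht : 2 ≤ t) (htk : t ≤ k) :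
    (∀ D : (Fin k → Bool) → ℝ,
        (∀ z, 0 ≤ D z) → (∑ z, D z = 1) →
        (∀ T : Finset (Fin k), T.card = t → ∀ y : Fin k → Bool,
          ∑ z ∈ Finset.univ.filter (fun z : Fin k → Bool => ∀ i ∈ T, z i = y i), D z
            = 1 / 2 ^ t) →
        δ ≤ ∑ z ∈ Finset.univ.filter (fun z : Fin k → Bool => P z = false), D z)
    ↔
    (∃ Q : Finset (Fin k) → ℝ,
        (∀ S : Finset (Fin k), t < S.card → Q S = 0) ∧ Q ∅ = 0 ∧
        (∀ z : Fin k → Bool,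
          δ - 1 ≤ ∑ S : Finset (Fin k), Q S * ∏ i ∈ S, (if z i then (1:ℝ) else -1)) ∧
        (∀ z : Fin k → Bool, P z = true →
          δ ≤ ∑ S : Finset (Fin k), Q S * ∏ i ∈ S, (if z i then (1:ℝ) else -1))) :=
  delta_far_iff_separating_poly_general P δ htk
end

section
/- Suppose P : {-1,1}^k → {0,1} does not support any t-wise uniform distribution. Then P is in fact δ-far from supporting a t-wise uniform distribution for some δ > 0; moreover one can take δ ≥ 1/K^{K/2} where K = 1 + Σ_{i=1}^t C(k,i). -/
/-!
Minimising the mass a distribution puts on `P⁻¹(0)` is a linear program. For `t ≤ k`, a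
distribution `D` is `t`-wise uniform iff its Walsh coefficients `∑ z, D z * walsh S z` equal
`[S = ∅]` for all `|S| ≤ t`: a system of `K` equations with `±1` coefficients. Moving along kernel
directions of the support columns never increases the objective and shrinks the support, ending at
a basic solution `E`, whose support columns are linearly independent. As `P` supports no `t`-wise
uniform distribution, `E` charges some `z` with `P z = false`. On a nonsingular square block `N`
of the system, Cramer's rule makes `E z` a nonzero integer divided by `det N`, and Hadamard's
inequality gives `|det N| ≤ K^(K/2)`. For `t > k` the uniformity constraints are vacuous, so `P`
vanishes everywhere.
-/

open Finset Matrix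

theorem Matrix.abs_det_le_prod_sqrt_sum_sq {n : Type*} [Fintype n] [DecidableEq n]
    (A : Matrix n n ℝ) : |A.det| ≤ ∏ i, √(∑ j, A i j ^ 2) := by
  suffices h : ∀ m (B : Matrix (Fin m) (Fin m) ℝ), |B.det| ≤ ∏ i, √(∑ j, B i j ^ 2) by
    let σ := (Fintype.equivFin n).symm
    have := h _ (A.submatrix σ σ)
    simp only [det_submatrix_equiv_self, submatrix_apply] at this
    rwa [σ.prod_comp (fun i => √(∑ j, A i (σ j) ^ 2)),
      prod_congr rfl fun i _ => by rw [σ.sum_comp (fun j => A i j ^ 2)]] at this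
  intro m B
  set v : Fin m → EuclideanSpace ℝ (Fin m) := fun i => WithLp.toLp 2 (B i)
  set e := EuclideanSpace.basisFun (Fin m) ℝ
  set b := InnerProductSpace.gramSchmidtOrthonormalBasis finrank_euclideanSpace v
  have hB : e.toBasis.det v = B.det := by
    rw [Module.Basis.det_apply, ← det_transpose]
    congr 1
  have hchange : e.toBasis.det v = e.toBasis.det b * b.toBasis.det v := by
    conv_lhs => rw [AlternatingMap.eq_smul_basis_det b.toBasis e.toBasis.det]
    simp
  have he : |e.toBasis.det b| = 1 := by
    rcases OrthonormalBasis.det_to_matrix_orthonormalBasis_real e b with h | h <;> simp [h]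
  rw [← hB, hchange, abs_mul, he, one_mul, InnerProductSpace.gramSchmidtOrthonormalBasis_det,
    abs_prod]
  gcongr with i
  have := abs_real_inner_le_norm (b i) (v i)
  simpa [b.orthonormal.1 i, EuclideanSpace.norm_eq, v] using this

theorem Matrix.abs_det_le_sqrt_card_pow {n : Type*} [Fintype n] [DecidableEq n]
    (A : Matrix n n ℝ) (hA : ∀ i j, |A i j| ≤ 1) :
    |A.det| ≤ √(Fintype.card n) ^ Fintype.card n := by
  calc |A.det| ≤ ∏ i, √(∑ j, A i j ^ 2) := A.abs_det_le_prod_sqrt_sum_sq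
    _ ≤ ∏ _i : n, √(Fintype.card n) := by
        gcongr with i
        calc ∑ j, A i j ^ 2 ≤ ∑ _j : n, (1 : ℝ) :=
              sum_le_sum fun j _ => by rw [← sq_abs]; exact pow_le_one₀ (abs_nonneg _) (hA i j)
          _ = Fintype.card n := by simp
    _ = √(Fintype.card n) ^ Fintype.card n := by rw [prod_const, card_univ]

theorem Matrix.abs_det_submatrix_le {m s : Type*} [Fintype m] [Fintype s] [DecidableEq s]
    (A : Matrix m s ℝ) (hA : ∀ i j, |A i j| ≤ 1) (r : s → m) :
    |(A.submatrix r id).det| ≤ √(Fintype.card m) ^ Fintype.card m := by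
  by_cases hr : Function.Injective r
  · have hsm := Fintype.card_le_of_injective r hr
    rcases (Fintype.card m).eq_zero_or_pos with hm | hm
    · have : IsEmpty s := Fintype.card_eq_zero_iff.mp (by omega)
      simp [hm]
    calc |(A.submatrix r id).det| ≤ √(Fintype.card s) ^ Fintype.card s :=
          abs_det_le_sqrt_card_pow _ fun i j => hA (r i) j
      _ ≤ √(Fintype.card m) ^ Fintype.card s := by gcongr
      _ ≤ √(Fintype.card m) ^ Fintype.card m :=
          pow_le_pow_right₀ (Real.one_le_sqrt.mpr (by exact_mod_cast hm)) hsm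
  · obtain ⟨i, i', h, hne⟩ := Function.not_injective_iff.mp hr
    rw [det_zero_of_row_eq hne (by ext; simp [h]), abs_zero]
    positivity

theorem Matrix.exists_det_submatrix_ne_zero {K m s : Type*} [Field K] [Fintype m]
    [Fintype s] [DecidableEq s] (B : Matrix m s K) (hB : Function.Injective B.mulVec) :
    ∃ r : s → m, (B.submatrix r id).det ≠ 0 := by
  have hspan : Submodule.span K (Set.range B.row) = ⊤ := by
    apply Submodule.eq_top_of_finrank_eq
    rw [← rank_eq_finrank_span_row, rank, LinearMap.finrank_range_of_inj hB]
  obtain ⟨κ, a, ha, hspan', hli⟩ := exists_linearIndependent' K B.row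
  rw [hspan] at hspan'
  have : Fintype κ := have := Finite.of_injective a ha; Fintype.ofFinite κ
  have hcard : Fintype.card s = Fintype.card κ := by
    rw [← Module.finrank_fintype_fun_eq_card K,
      Module.finrank_eq_card_basis (Module.Basis.mk hli hspan'.ge)]
  let e := Fintype.equivOfCardEq hcard
  refine ⟨a ∘ e, fun h => ?_⟩
  have hunit : IsUnit (B.submatrix (a ∘ e) id) :=
    linearIndependent_rows_iff_isUnit.mp (hli.comp e e.injective)
  exact (isUnit_iff_isUnit_det _).mp hunit |>.ne_zero h

theorem Matrix.det_updateCol_mulVec {R n : Type*} [CommRing R] [Fintype n] [DecidableEq n]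
    (A : Matrix n n R) (y : n → R) (j : n) :
    (A.updateCol j (A *ᵥ y)).det = A.det * y j := by
  rw [← cramer_apply, cramer_eq_adjugate_mulVec, mulVec_mulVec, adjugate_mul, smul_mulVec,
    one_mulVec]
  rfl

theorem Matrix.one_le_abs_det_mul_abs_of_mulVec_eq {n : Type*} [Fintype n] [DecidableEq n]
    {N : Matrix n n ℤ} (hN : N.det ≠ 0) {b : n → ℤ} {y : n → ℝ}
    (hy : N.map ((↑) : ℤ → ℝ) *ᵥ y = fun i => (b i : ℝ)) {j : n} (hj : y j ≠ 0) :
    1 ≤ |(N.det : ℝ)| * |y j| := by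
  have key : ((N.updateCol j b).det : ℝ) = N.det * y j := by
    rw [Int.cast_det, Int.cast_det, ← det_updateCol_mulVec, hy, map_updateCol]
    rfl
  have hne : (N.updateCol j b).det ≠ 0 := by
    exact_mod_cast key ▸ mul_ne_zero (Int.cast_ne_zero.mpr hN) hj
  rw [← abs_mul, ← key]
  exact_mod_cast Int.one_le_abs hne

section LinearProgram

variable {κ ι : Type*} [Fintype ι]

theorem Matrix.mulVec_eq_submatrix_mulVec {R : Type*} [CommSemiring R] (A : Matrix κ ι R)
    {p : ι → Prop} [DecidablePred p] {v : ι → R} (hv : ∀ j, ¬ p j → v j = 0) :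
    A *ᵥ v = A.submatrix id (Subtype.val : {j // p j} → ι) *ᵥ fun j => v j := by
  ext i
  simp only [mulVec, dotProduct, submatrix_apply, id]
  rw [← Fintype.sum_subtype_add_sum_subtype p,
    Fintype.sum_eq_zero (fun j : {j // ¬ p j} => A i j * v j) fun j => by rw [hv j j.2, mul_zero],
    add_zero]

/-- The columns of `A` indexed by the support of `x` are linearly independent. -/
def Matrix.IsBasicSolution (A : Matrix κ ι ℝ) (x : ι → ℝ) : Prop :=
  ∀ d : ι → ℝ, (∀ j, x j = 0 → d j = 0) → A *ᵥ d = 0 → d = 0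

theorem exists_nonneg_add_smul_card_support_lt {x d : ι → ℝ} (hx : 0 ≤ x)
    (hdx : ∀ j, x j = 0 → d j = 0) (hneg : ∃ j, d j < 0) :
    ∃ θ : ℝ, 0 ≤ θ ∧ 0 ≤ x + θ • d ∧ #{j | (x + θ • d) j ≠ 0} < #{j | x j ≠ 0} := by
  obtain ⟨j₀, hj₀, hmin⟩ := exists_min_image {j | d j < 0} (fun j => x j / -d j)
    (by simpa [Finset.Nonempty] using hneg)
  simp only [mem_filter, mem_univ, true_and] at hj₀ hmin
  -- ratio test: the largest step keeping `x + θ • d` nonnegative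
  set θ := x j₀ / -d j₀
  have hθ : 0 ≤ θ := div_nonneg (hx j₀) (by linarith)
  refine ⟨θ, hθ, fun j => ?_, card_lt_card ⟨fun j => ?_, fun hsub => ?_⟩⟩
  · show 0 ≤ x j + θ * d j
    rcases lt_or_ge (d j) 0 with hdj | hdj
    · have := (le_div_iff₀ (neg_pos.mpr hdj)).mp (hmin j hdj)
      linarith
    · exact add_nonneg (hx j) (mul_nonneg hθ hdj)
  · simp only [mem_filter, mem_univ, true_and, Pi.add_apply, Pi.smul_apply, smul_eq_mul]
    intro hj hxj
    simp [hxj, hdx j hxj] at hj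
  · have hx₀ : x j₀ ≠ 0 := fun h => hj₀.ne (hdx j₀ h)
    have h₀ : x j₀ + θ * d j₀ = 0 := by
      rw [div_mul_eq_mul_div, div_neg, mul_div_assoc, div_self hj₀.ne]
      ring
    simpa [hx₀, h₀] using @hsub j₀

theorem exists_descent_direction {A : Matrix κ ι ℝ} {c x : ι → ℝ} (hc : 0 ≤ c)
    (hx : ¬ A.IsBasicSolution x) :
    ∃ d, (∀ j, x j = 0 → d j = 0) ∧ A *ᵥ d = 0 ∧ c ⬝ᵥ d ≤ 0 ∧ ∃ j, d j < 0 := by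
  simp only [IsBasicSolution, not_forall] at hx
  obtain ⟨d, hdx, hAd, hd⟩ := hx
  wlog hcd : c ⬝ᵥ d ≤ 0 generalizing d
  · exact this (-d) (by simpa using hdx) (by rw [mulVec_neg, hAd, neg_zero]) (neg_ne_zero.mpr hd)
      (by rw [dotProduct_neg]; linarith)
  by_cases hneg : ∃ j, d j < 0
  · exact ⟨d, hdx, hAd, hcd, hneg⟩
  push Not at hneg
  have hcd0 : c ⬝ᵥ d = 0 :=
    le_antisymm hcd (sum_nonneg fun j _ => mul_nonneg (hc j) (hneg j))
  obtain ⟨j, hj⟩ := Function.ne_iff.mp hd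
  refine ⟨-d, by simpa using hdx, by rw [mulVec_neg, hAd, neg_zero], by simp [hcd0], j, ?_⟩
  simpa using lt_of_le_of_ne (hneg j) (Ne.symm hj)

theorem exists_isBasicSolution_le (A : Matrix κ ι ℝ) {c : ι → ℝ} (hc : 0 ≤ c)
    {x : ι → ℝ} (hx : 0 ≤ x) :
    ∃ y, 0 ≤ y ∧ A *ᵥ y = A *ᵥ x ∧ c ⬝ᵥ y ≤ c ⬝ᵥ x ∧ A.IsBasicSolution y := by
  induction h : #{j | x j ≠ 0} using Nat.strong_induction_on generalizing x with
  | _ n ih =>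
  by_cases hb : A.IsBasicSolution x
  · exact ⟨x, hx, rfl, le_rfl, hb⟩
  obtain ⟨d, hdx, hAd, hcd, hneg⟩ := exists_descent_direction hc hb
  obtain ⟨θ, hθ, hx', hlt⟩ := exists_nonneg_add_smul_card_support_lt hx hdx hneg
  obtain ⟨y, hy, hAy, hcy, hyb⟩ := ih _ (h ▸ hlt) hx' rfl
  refine ⟨y, hy, by simp [hAy, mulVec_add, mulVec_smul, hAd], hcy.trans ?_, hyb⟩
  rw [dotProduct_add, dotProduct_smul, smul_eq_mul]
  linarith [mul_nonpos_of_nonneg_of_nonpos hθ hcd]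

theorem Matrix.IsBasicSolution.injective_mulVec_submatrix {A : Matrix κ ι ℝ} {y : ι → ℝ}
    (hy : A.IsBasicSolution y) :
    Function.Injective (A.submatrix id (Subtype.val : {j // y j ≠ 0} → ι)).mulVec := by
  classical
  rw [← coe_mulVecLin, injective_iff_map_eq_zero]
  intro u hu
  set d : ι → ℝ := fun j => if h : y j ≠ 0 then u ⟨j, h⟩ else 0
  have hd : A *ᵥ d = 0 := by
    have hdu : (fun j : {j // y j ≠ 0} => d j) = u := funext fun j => dif_pos j.2
    rw [A.mulVec_eq_submatrix_mulVec (p := fun j => y j ≠ 0) fun j hj => dif_neg hj, hdu]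
    exact hu
  have := hy d (fun j hj => dif_neg (not_not.mpr hj)) hd
  ext ⟨j, hj⟩
  simpa [d, hj] using congrFun this j

theorem Matrix.IsBasicSolution.one_div_le_abs [Fintype κ] {A : Matrix κ ι ℤ}
    (hA : ∀ i j, |A i j| ≤ 1) {b : κ → ℤ} {y : ι → ℝ}
    (hy : A.map ((↑) : ℤ → ℝ) *ᵥ y = fun i => (b i : ℝ))
    (hbasic : (A.map ((↑) : ℤ → ℝ)).IsBasicSolution y) {j : ι} (hj : y j ≠ 0) :
    1 / √(Fintype.card κ) ^ Fintype.card κ ≤ |y j| := by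
  classical
  set B := (A.map ((↑) : ℤ → ℝ)).submatrix id (Subtype.val : {j // y j ≠ 0} → ι)
  obtain ⟨r, hr⟩ := exists_det_submatrix_ne_zero B hbasic.injective_mulVec_submatrix
  set N := A.submatrix r (Subtype.val : {j // y j ≠ 0} → ι)
  have hNdet : (N.det : ℝ) = (B.submatrix r id).det := by
    rw [Int.cast_det]
    rfl
  have hNy : N.map ((↑) : ℤ → ℝ) *ᵥ (fun j => y j) = fun i => (b (r i) : ℝ) := funext fun i =>
    (congrFun (hy ▸ (A.map _).mulVec_eq_submatrix_mulVec fun j hj => not_not.mp hj) (r i)).symm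
  have hκ : 0 < √(Fintype.card κ) :=
    Real.sqrt_pos.mpr (Nat.cast_pos.mpr (Fintype.card_pos_iff.mpr ⟨r ⟨j, hj⟩⟩))
  rw [div_le_iff₀ (pow_pos hκ _)]
  calc 1 ≤ |(N.det : ℝ)| * |y j| :=
        one_le_abs_det_mul_abs_of_mulVec_eq (by exact_mod_cast hNdet ▸ hr) hNy (j := ⟨j, hj⟩) hj
    _ ≤ √(Fintype.card κ) ^ Fintype.card κ * |y j| := by
        rw [hNdet]
        gcongr
        exact abs_det_submatrix_le B (fun i l => by
          simp only [B, submatrix_apply, map_apply, id]; exact_mod_cast hA i l) r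
    _ = |y j| * √(Fintype.card κ) ^ Fintype.card κ := mul_comm _ _

end LinearProgram

theorem Fintype.card_finset_card_le {α : Type*} [Fintype α] (t : ℕ) :
    Fintype.card {S : Finset α // S.card ≤ t} = 1 + ∑ i ∈ Icc 1 t, (Fintype.card α).choose i := by
  classical
  have hfib : ∀ i ∈ range (t + 1),
      #{S ∈ (univ.filter fun S : Finset α => S.card ≤ t) | S.card = i} =
        (Fintype.card α).choose i :=
    fun i hi => by
      rw [← card_univ, ← card_powersetCard, powersetCard_eq_filter, powerset_univ, filter_filter]
      congr 1
      ext S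
      simp only [mem_filter, mem_univ, true_and]
      have := mem_range.mp hi
      constructor <;> intro h <;> first | exact h.2 | exact ⟨by omega, h⟩
  rw [Fintype.card_subtype, Finset.card_eq_sum_card_fiberwise (t := range (t + 1))
    (fun S hS => mem_range.mpr (Nat.lt_succ_of_le (mem_filter.mp hS).2)), Finset.sum_congr rfl hfib,
    sum_range_succ', Nat.choose_zero_right, add_comm, ← Ico_add_one_right_eq_Icc,
    sum_Ico_eq_sum_range]
  simp [add_comm]

section BooleanCube

variable {α : Type*}

def walsh (S : Finset α) (z : α → Bool) : ℤ := ∏ i ∈ S, if z i then 1 else -1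

theorem abs_walsh (S : Finset α) (z : α → Bool) : |walsh S z| = 1 := by
  rw [walsh, abs_prod]
  exact prod_eq_one fun i _ => by split_ifs <;> simp

def walshMatrix (α : Type*) (t : ℕ) : Matrix {S : Finset α // S.card ≤ t} (α → Bool) ℤ :=
  of fun S z => walsh S.1 z

theorem abs_walshMatrix_apply_le {t : ℕ} (S : {S : Finset α // S.card ≤ t}) (z : α → Bool) :
    |walshMatrix α t S z| ≤ 1 :=
  (abs_walsh S.1 z).le

theorem walsh_update_not [DecidableEq α] {S : Finset α} {i₀ : α} (hi₀ : i₀ ∈ S)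
    (y : α → Bool) : walsh S (Function.update y i₀ (!y i₀)) = -walsh S y := by
  rw [walsh, walsh, ← mul_prod_erase _ _ hi₀, ← mul_prod_erase _ _ hi₀,
    prod_congr rfl fun i hi => by rw [Function.update_of_ne (ne_of_mem_erase hi)]]
  cases y i₀ <;> simp

theorem sum_walsh_eq_zero [DecidableEq α] {S : Finset α} {i₀ : α} (hi₀ : i₀ ∈ S)
    {Y : Finset (α → Bool)} (hY : ∀ y ∈ Y, Function.update y i₀ (!y i₀) ∈ Y) :
    ∑ y ∈ Y, walsh S y = 0 :=
  sum_involution (fun y _ => Function.update y i₀ (!y i₀))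
    (fun y _ => by rw [walsh_update_not hi₀, add_neg_cancel])
    (fun y _ _ h => by simpa using congrFun h i₀)
    hY
    (fun y _ => by simp)

theorem sum_powerset_walsh_mul_walsh (T : Finset α) (y z : α → Bool) :
    ∑ U ∈ T.powerset, (walsh U y * walsh U z : ℝ) =
      if ∀ i ∈ T, z i = y i then 2 ^ T.card else 0 := by
  have hfactor : ∀ i, 1 + ((if y i then 1 else -1) * (if z i then 1 else -1) : ℝ) =
      if z i = y i then 2 else 0 := fun i => by
    cases y i <;> cases z i <;> norm_num
  simp only [walsh, Int.cast_prod, ← prod_mul_distrib]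
  push_cast
  rw [← prod_one_add, prod_congr rfl fun i _ => hfactor i, prod_ite_zero, prod_const]

variable [Fintype α] [DecidableEq α]

def IsTWiseUniform (t : ℕ) (D : (α → Bool) → ℝ) : Prop :=
  ∀ T : Finset α, T.card = t → ∀ y : α → Bool,
    ∑ z ∈ univ.filter (fun z : α → Bool => ∀ i ∈ T, z i = y i), D z = 1 / 2 ^ t

theorem isTWiseUniform_of_card_lt {t : ℕ} (ht : Fintype.card α < t) (D : (α → Bool) → ℝ) :
    IsTWiseUniform t D := fun T hT => absurd (hT ▸ card_le_univ T) (by omega)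

theorem isTWiseUniform_of_sum_mul_walsh {t : ℕ} {D : (α → Bool) → ℝ}
    (hD : ∀ S : Finset α, S.card ≤ t → ∑ z, D z * walsh S z = if S = ∅ then 1 else 0) :
    IsTWiseUniform t D := by
  intro T hT y
  calc ∑ z ∈ univ.filter (fun z : α → Bool => ∀ i ∈ T, z i = y i), D z
      = ∑ z, D z * (∑ U ∈ T.powerset, (walsh U y * walsh U z : ℝ)) / 2 ^ t := by
        simp_rw [sum_powerset_walsh_mul_walsh, hT, mul_ite, mul_zero, ite_div, zero_div,
          sum_ite, sum_const_zero, add_zero]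
        exact sum_congr rfl fun z _ => by field_simp
    _ = (∑ U ∈ T.powerset, walsh U y * ∑ z, D z * walsh U z) / 2 ^ t := by
        rw [← sum_div]
        simp_rw [mul_sum]
        rw [sum_comm]
        exact congrArg (· / _) (sum_congr rfl fun U _ => sum_congr rfl fun z _ => by ring)
    _ = 1 / 2 ^ t := by
        rw [sum_congr rfl fun U hU => by
          rw [hD U (hT ▸ card_le_card (mem_powerset.mp hU))]]
        simp [walsh]

theorem sum_mul_walsh_of_isTWiseUniform {t : ℕ}
    {D : (α → Bool) → ℝ} (ht : t ≤ Fintype.card α) (hD1 : ∑ z, D z = 1)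
    (hD : IsTWiseUniform t D) {S : Finset α} (hS : S.card ≤ t) :
    ∑ z, D z * walsh S z = if S = ∅ then 1 else 0 := by
  rcases eq_or_ne S ∅ with rfl | hS₀
  · simp [walsh, hD1]
  rw [if_neg hS₀]
  obtain ⟨T, hST, hT⟩ := exists_superset_card_eq hS (by simpa using ht)
  obtain ⟨i₀, hi₀⟩ := nonempty_iff_ne_empty.mpr hS₀
  -- Group `z` by its pattern `π z` on `T`: every cylinder carries mass `2⁻ᵗ`, and the Walsh
  -- function is constant on cylinders, so the sum reduces to one of `walsh S` over patterns.
  set π : (α → Bool) → (α → Bool) := fun z i => if i ∈ T then z i else false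
  set Y := univ.filter fun y : α → Bool => ∀ i ∉ T, y i = false
  have hπY : ∀ z ∈ univ, π z ∈ Y := fun z _ => by simp +contextual [Y, π]
  have hfiber : ∀ y ∈ Y, univ.filter (fun z => π z = y) =
      univ.filter (fun z : α → Bool => ∀ i ∈ T, z i = y i) := fun y hy => by
    simp only [Y, mem_filter, mem_univ, true_and] at hy
    ext z
    simp only [mem_filter, mem_univ, true_and, funext_iff, π]
    refine ⟨fun h i hi => by simpa [hi] using h i, fun h i => ?_⟩
    by_cases hi : i ∈ T <;> simp [hi, h, hy]
  have hwalsh : ∀ y, ∀ z ∈ univ.filter (fun z : α → Bool => ∀ i ∈ T, z i = y i),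
      walsh S z = walsh S y := fun y z hz => by
    simp only [mem_filter, mem_univ, true_and] at hz
    exact prod_congr rfl fun i hi => by rw [hz i (hST hi)]
  have hYflip : ∀ y ∈ Y, Function.update y i₀ (!y i₀) ∈ Y := fun y hy => by
    simp only [Y, mem_filter, mem_univ, true_and] at hy ⊢
    intro i hi
    rw [Function.update_of_ne (ne_of_mem_of_not_mem (hST hi₀) hi).symm, hy i hi]
  calc ∑ z, D z * walsh S z
      = ∑ y ∈ Y, ∑ z ∈ univ.filter (fun z => π z = y), D z * walsh S z :=
        (sum_fiberwise_of_maps_to hπY _).symm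
    _ = ∑ y ∈ Y, (walsh S y : ℝ) / 2 ^ t := sum_congr rfl fun y hy => by
        rw [hfiber y hy, sum_congr rfl fun z hz => by rw [hwalsh y z hz], ← sum_mul,
          hD T hT y]
        ring
    _ = 0 := by
        rw [← sum_div, ← Int.cast_sum, sum_walsh_eq_zero hi₀ hYflip]
        simp

theorem walshMatrix_mulVec_eq_iff {t : ℕ} {D : (α → Bool) → ℝ} :
    (walshMatrix α t).map ((↑) : ℤ → ℝ) *ᵥ D = (fun S => ((if S.1 = ∅ then 1 else 0 : ℤ) : ℝ)) ↔
      ∀ S : Finset α, S.card ≤ t → ∑ z, D z * walsh S z = if S = ∅ then 1 else 0 := by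
  simp only [funext_iff, mulVec, dotProduct, walshMatrix, map_apply, of_apply, Subtype.forall]
  refine forall₂_congr fun S _ => ?_
  push_cast
  simp_rw [mul_comm]

theorem isTWiseUniform_iff_walshMatrix_mulVec {t : ℕ} (ht : t ≤ Fintype.card α)
    {D : (α → Bool) → ℝ} :
    (∑ z, D z = 1 ∧ IsTWiseUniform t D) ↔
      (walshMatrix α t).map ((↑) : ℤ → ℝ) *ᵥ D =
        fun S => ((if S.1 = ∅ then 1 else 0 : ℤ) : ℝ) := by
  rw [walshMatrix_mulVec_eq_iff]
  refine ⟨fun ⟨hD1, hD⟩ S hS => sum_mul_walsh_of_isTWiseUniform ht hD1 hD hS,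
    fun hD => ⟨?_, isTWiseUniform_of_sum_mul_walsh hD⟩⟩
  simpa [walsh] using hD ∅ (by simp)

def SupportsTWiseUniform (t : ℕ) (P : (α → Bool) → Bool) : Prop :=
  ∃ D : (α → Bool) → ℝ, 0 ≤ D ∧ ∑ z, D z = 1 ∧ IsTWiseUniform t D ∧ ∀ z, D z ≠ 0 → P z = true

theorem eq_false_of_not_supportsTWiseUniform {t : ℕ} (ht : Fintype.card α < t)
    {P : (α → Bool) → Bool} (hP : ¬ SupportsTWiseUniform t P) (z : α → Bool) : P z = false := by
  by_contra hz
  refine hP ⟨Pi.single z 1, fun w => ?_, by simp, isTWiseUniform_of_card_lt ht _, fun w hw => ?_⟩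
  · by_cases h : w = z <;> simp [h]
  · simp_all [Pi.single_apply]

theorem one_div_sqrt_card_pow_le_sum_of_not_supportsTWiseUniform {t : ℕ}
    (ht : t ≤ Fintype.card α) {P : (α → Bool) → Bool}
    (hP : ¬ SupportsTWiseUniform t P) {D : (α → Bool) → ℝ} (hD0 : 0 ≤ D) (hD1 : ∑ z, D z = 1)
    (hD : IsTWiseUniform t D) :
    1 / √(Fintype.card {S : Finset α // S.card ≤ t}) ^ Fintype.card {S : Finset α // S.card ≤ t}
      ≤ ∑ z ∈ univ.filter (fun z => P z = false), D z := by
  set c : (α → Bool) → ℝ := fun z => if P z = false then 1 else 0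
  have hc : 0 ≤ c := fun z => by positivity
  obtain ⟨E, hE0, hAE, hcE, hEb⟩ := exists_isBasicSolution_le ((walshMatrix α t).map (↑)) hc hD0
  have hAD := (isTWiseUniform_iff_walshMatrix_mulVec ht).mp ⟨hD1, hD⟩
  obtain ⟨hE1, hEu⟩ := (isTWiseUniform_iff_walshMatrix_mulVec ht).mpr (hAE.trans hAD)
  obtain ⟨z, hEz, hPz⟩ : ∃ z, E z ≠ 0 ∧ P z = false := by
    by_contra! h
    exact hP ⟨E, hE0, hE1, hEu, fun z hz => by simpa using h z hz⟩
  calc _ ≤ |E z| := hEb.one_div_le_abs (b := fun S => if S.1 = ∅ then 1 else 0)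
          abs_walshMatrix_apply_le (hAE.trans hAD) hEz
    _ = c z * E z := by simp [c, hPz, abs_of_nonneg (hE0 z)]
    _ ≤ c ⬝ᵥ E := single_le_sum (f := fun z => c z * E z)
          (fun z _ => mul_nonneg (hc z) (hE0 z)) (mem_univ z)
    _ ≤ c ⬝ᵥ D := hcE
    _ = _ := by simp [c, dotProduct, sum_filter]

end BooleanCube

/-- if `P : {-1,1}^k → {0,1}` does not support any t-wise uniform
distribution, then it is δ-far from supporting one for `δ = 1 / K^(K/2)` where
`K = 1 + Σ_{i=1}^t C(k,i)`: every t-wise uniform distribution puts probability mass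
at least `1 / K^(K/2)` on `P⁻¹(0)`. -/
theorem not_supporting_implies_far {k t : ℕ} (P : (Fin k → Bool) → Bool)
    (hns : ¬ ∃ D : (Fin k → Bool) → ℝ,
        (∀ z, 0 ≤ D z) ∧ (∑ z, D z = 1) ∧
        (∀ T : Finset (Fin k), T.card = t → ∀ y : Fin k → Bool,
          ∑ z ∈ Finset.univ.filter (fun z : Fin k → Bool => ∀ i ∈ T, z i = y i), D z
            = 1 / 2 ^ t) ∧
        (∀ z, D z ≠ 0 → P z = true)) :
    ∀ D : (Fin k → Bool) → ℝ,
      (∀ z, 0 ≤ D z) → (∑ z, D z = 1) →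
      (∀ T : Finset (Fin k), T.card = t → ∀ y : Fin k → Bool,
        ∑ z ∈ Finset.univ.filter (fun z : Fin k → Bool => ∀ i ∈ T, z i = y i), D z
          = 1 / 2 ^ t) →
      1 / ((1 + ∑ i ∈ Finset.Icc 1 t, Nat.choose k i : ℝ)
            ^ (((1 + ∑ i ∈ Finset.Icc 1 t, Nat.choose k i : ℕ) : ℝ) / 2))
        ≤ ∑ z ∈ Finset.univ.filter (fun z : Fin k → Bool => P z = false), D z := by
  intro D hD0 hD1 hDu
  -- The statement decides `∀ i ∈ T` by `Nat.decidableForallFin`, not by the generic instance.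
  have hP : ¬ SupportsTWiseUniform t P := fun ⟨E, hE0, hE1, hEu, hEP⟩ =>
    hns ⟨E, hE0, hE1, fun T hT y => by convert hEu T hT y, hEP⟩
  have hD : IsTWiseUniform t D := fun T hT y => by convert hDu T hT y
  set K := Fintype.card {S : Finset (Fin k) // S.card ≤ t}
  have hK : 1 + ∑ i ∈ Icc 1 t, k.choose i = K := by
    rw [show K = _ from Fintype.card_finset_card_le t, Fintype.card_fin]
  have hK' : (K : ℝ) ^ ((K : ℝ) / 2) = √K ^ K := by
    rw [Real.sqrt_eq_rpow, ← Real.rpow_natCast, ← Real.rpow_mul K.cast_nonneg, one_div_mul_eq_div]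
  rw [show 1 + ((∑ i ∈ Icc 1 t, k.choose i : ℕ) : ℝ) = K by exact_mod_cast hK, hK, hK']
  rcases le_or_gt t k with htk | hkt
  · exact one_div_sqrt_card_pow_le_sum_of_not_supportsTWiseUniform (by simpa using htk) hP hD0
      hD1 hD
  · have hK1 : 1 ≤ √K ^ K :=
      one_le_pow₀ (Real.one_le_sqrt.mpr (by exact_mod_cast hK ▸ Nat.le_add_right 1 _))
    calc 1 / √K ^ K ≤ 1 := div_le_one_of_le₀ hK1 (by positivity)
      _ = _ := by
        simp [eq_false_of_not_supportsTWiseUniform (by simpa using hkt) hP, hD1]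
end

section
/- For odd k ≥ 5, define Q_u(s) = ((1+k)/6)s³ + ((1−k)/2)s² + ((3k²−7k−4)/6)s − (1−k)k/2. Then Q_u is monotonically increasing on ℝ, Q_u(−1) = 1, and Q_u(−k) = −(1/6)(k⁴ + 7k³ − 13k² − k) < 0. Consequently Q_u(s) ≥ 1 for all real s ≥ −1 and Q_u(s) ≥ −(1/6)(k⁴+7k³−13k²−k) for all s ∈ [−k, k]. -/
/-!
The derivative of `Q_u` is a quadratic in `s` that is positive for every real `k ≥ 4`, since
`6 Q_u'(s) = (k - 4) (3 (s - 1)² + 3k + 2) + 15 ((s - 3/5)² + 53/75)`. So `Q_u` is strictly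
increasing, and the two lower bounds are its values at the left endpoints `-1` and `-k`.
-/

/-- The polynomial `Q_u` with a real parameter `k`. -/
noncomputable def thrPoly (k s : ℝ) : ℝ :=
  ((1 + k) / 6) * s ^ 3 + ((1 - k) / 2) * s ^ 2 + ((3 * k ^ 2 - 7 * k - 4) / 6) * s
    - (1 - k) * k / 2

namespace thrPoly

theorem hasDerivAt (k s : ℝ) :
    HasDerivAt (thrPoly k)
      ((1 + k) / 2 * s ^ 2 + (1 - k) * s + (3 * k ^ 2 - 7 * k - 4) / 6) s := by
  refine (((((hasDerivAt_pow 3 s).const_mul ((1 + k) / 6)).add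
    ((hasDerivAt_pow 2 s).const_mul ((1 - k) / 2))).add
    ((hasDerivAt_id s).const_mul ((3 * k ^ 2 - 7 * k - 4) / 6))).sub_const
    ((1 - k) * k / 2)).congr_deriv ?_
  push_cast
  ring

theorem deriv_pos {k : ℝ} (hk : 4 ≤ k) (s : ℝ) :
    0 < (1 + k) / 2 * s ^ 2 + (1 - k) * s + (3 * k ^ 2 - 7 * k - 4) / 6 := by
  have key : (1 + k) / 2 * s ^ 2 + (1 - k) * s + (3 * k ^ 2 - 7 * k - 4) / 6
      = ((k - 4) * (3 * (s - 1) ^ 2 + 3 * k + 2) + 15 * ((s - 3 / 5) ^ 2 + 53 / 75)) / 6 := by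
    ring
  rw [key]
  have : 0 ≤ (k - 4) * (3 * (s - 1) ^ 2 + 3 * k + 2) := by
    apply mul_nonneg <;> nlinarith [sq_nonneg (s - 1)]
  positivity

theorem strictMono {k : ℝ} (hk : 4 ≤ k) : StrictMono (thrPoly k) :=
  strictMono_of_deriv_pos fun s => (hasDerivAt k s).deriv ▸ deriv_pos hk s

theorem eval_neg_one (k : ℝ) : thrPoly k (-1) = 1 := by
  unfold thrPoly
  ring

theorem eval_neg_self (k : ℝ) :
    thrPoly k (-k) = -(1 / 6) * (k ^ 4 + 7 * k ^ 3 - 13 * k ^ 2 - k) := by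
  unfold thrPoly
  ring

theorem eval_neg_self_neg {k : ℝ} (hk : 2 ≤ k) : thrPoly k (-k) < 0 := by
  rw [eval_neg_self]
  nlinarith [mul_nonneg (sub_nonneg.2 hk) (sub_nonneg.2 hk)]

end thrPoly

theorem thr_univariate_poly_general (k : ℕ) (hk : 5 ≤ k) :
    let Qu : ℝ → ℝ := fun s =>
      ((1 + (k:ℝ))/6) * s^3 + ((1 - (k:ℝ))/2) * s^2
        + ((3*(k:ℝ)^2 - 7*(k:ℝ) - 4)/6) * s - (1 - (k:ℝ))*(k:ℝ)/2
    StrictMono Qu ∧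
    Qu (-1) = 1 ∧
    Qu (-(k:ℝ)) = -(1/6) * ((k:ℝ)^4 + 7*(k:ℝ)^3 - 13*(k:ℝ)^2 - (k:ℝ)) ∧
    Qu (-(k:ℝ)) < 0 ∧
    (∀ s : ℝ, -1 ≤ s → 1 ≤ Qu s) ∧
    (∀ s : ℝ, -(k:ℝ) ≤ s → s ≤ (k:ℝ) →
      -(1/6) * ((k:ℝ)^4 + 7*(k:ℝ)^3 - 13*(k:ℝ)^2 - (k:ℝ)) ≤ Qu s) := by
  intro Qu
  have hQu : Qu = thrPoly k := rfl
  have hk5 : (5 : ℝ) ≤ k := by exact_mod_cast hk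
  have hmono := thrPoly.strictMono (k := k) (by linarith)
  rw [hQu]
  refine ⟨hmono, thrPoly.eval_neg_one k, thrPoly.eval_neg_self k,
    thrPoly.eval_neg_self_neg (by linarith), fun s hs => ?_, fun s hs _ => ?_⟩
  · exact thrPoly.eval_neg_one k ▸ hmono.monotone hs
  · exact thrPoly.eval_neg_self k ▸ hmono.monotone hs

/-- for odd `k ≥ 5`, the univariate polynomial
`Q_u(s) = ((1+k)/6)s³ + ((1−k)/2)s² + ((3k²−7k−4)/6)s − (1−k)k/2`
is monotonically increasing, `Q_u(−1) = 1`, `Q_u(−k) = −(1/6)(k⁴+7k³−13k²−k) < 0`;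
consequently `Q_u(s) ≥ 1` for `s ≥ −1` and `Q_u(s) ≥ −(1/6)(k⁴+7k³−13k²−k)` on `[−k,k]`. -/
theorem thr_univariate_poly (k : ℕ) (hodd : Odd k) (hk : 5 ≤ k) :
    let Qu : ℝ → ℝ := fun s =>
      ((1 + (k:ℝ))/6) * s^3 + ((1 - (k:ℝ))/2) * s^2
        + ((3*(k:ℝ)^2 - 7*(k:ℝ) - 4)/6) * s - (1 - (k:ℝ))*(k:ℝ)/2
    StrictMono Qu ∧
    Qu (-1) = 1 ∧
    Qu (-(k:ℝ)) = -(1/6) * ((k:ℝ)^4 + 7*(k:ℝ)^3 - 13*(k:ℝ)^2 - (k:ℝ)) ∧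
    Qu (-(k:ℝ)) < 0 ∧
    (∀ s : ℝ, -1 ≤ s → 1 ≤ Qu s) ∧
    (∀ s : ℝ, -(k:ℝ) ≤ s → s ≤ (k:ℝ) →
      -(1/6) * ((k:ℝ)^4 + 7*(k:ℝ)^3 - 13*(k:ℝ)^2 - (k:ℝ)) ≤ Qu s) :=
  thr_univariate_poly_general k hk
end

section
/- For every odd k ≥ 5, the predicate THR_k^{−1} : {-1,1}^k → {0,1}, defined by THR_k^{−1}(z) = 1 iff Σ_{i=1}^k z_i ≥ −1, does not support any 3-wise uniform distribution; in fact it is δ-far from supporting a 3-wise uniform distribution for δ = 6/(k⁴ + 7k³ − 13k² − k + 6). -/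
lemma thr_poly_good (k s : ℝ) (hk : 5 ≤ k) (hs : -1 ≤ s) :
    6 ≤ (k+1)*s^3 - 3*(k-1)*s^2 + (3*k^2-7*k-4)*s + (3*k^2-3*k) := by
  have h5 : (0:ℝ) ≤ k - 5 := by linarith
  have hq : 0 ≤ (k+1)*s^2 - (4*k-2)*s + (3*k^2-3*k-6) := by
    nlinarith [sq_nonneg (2*(k+1)*s - (4*k-2)), mul_nonneg (mul_nonneg h5 h5) h5,
      sq_nonneg (k-5), mul_nonneg h5 h5, sq_nonneg s, mul_nonneg h5 (sq_nonneg s)]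
  nlinarith [mul_nonneg (by linarith : (0:ℝ) ≤ s+1) hq]

lemma thr_poly_bad (k s : ℝ) (hk : 5 ≤ k) (hs : -k ≤ s) :
    -(k^4+7*k^3-13*k^2-k) ≤ (k+1)*s^3 - 3*(k-1)*s^2 + (3*k^2-7*k-4)*s + (3*k^2-3*k) := by
  have h5 : (0:ℝ) ≤ k - 5 := by linarith
  have hq : 0 ≤ (k+1)*s^2 - (k^2+4*k-3)*s + (k^3+7*k^2-10*k-4) := by
    nlinarith [sq_nonneg (2*(k+1)*s - (k^2+4*k-3)), mul_nonneg (mul_nonneg h5 h5) h5,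
      mul_nonneg (mul_nonneg (mul_nonneg h5 h5) h5) h5, mul_nonneg h5 h5,
      sq_nonneg s, mul_nonneg h5 (sq_nonneg s)]
  nlinarith [mul_nonneg (by linarith : (0:ℝ) ≤ s+k) hq]

noncomputable def eRR (b : Bool) : ℝ := if b then 1 else -1

lemma eRR_sq (b : Bool) : eRR b * eRR b = 1 := by cases b <;> norm_num [eRR]

section Moments
variable {k : ℕ} (D : (Fin k → Bool) → ℝ)
  (h3 : ∀ T : Finset (Fin k), T.card = 3 → ∀ y : Fin k → Bool,
    ∑ z ∈ Finset.univ.filter (fun z : Fin k → Bool => ∀ i ∈ T, z i = y i), D z = 1 / 2 ^ 3)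

include h3

lemma thr_fiber (i j l : Fin k) (hij : i ≠ j) (hil : i ≠ l) (hjl : j ≠ l)
    (F : Bool → Bool → Bool → ℝ) :
    ∑ z, D z * F (z i) (z j) (z l)
      = (∑ a : Bool, ∑ b : Bool, ∑ c : Bool, F a b c) / 8 := by
  rw [← Finset.sum_fiberwise_of_maps_to
    (g := fun z : Fin k → Bool => (z i, z j, z l))
    (t := (Finset.univ : Finset (Bool × Bool × Bool)))
    (fun x _ => Finset.mem_univ _) (fun z => D z * F (z i) (z j) (z l))]
  have step : ∀ p : Bool × Bool × Bool,
      (∑ z ∈ Finset.univ.filter (fun z : Fin k → Bool => (z i, z j, z l) = p),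
        D z * F (z i) (z j) (z l)) = F p.1 p.2.1 p.2.2 * (1/8) := by
    intro p
    have hT : ({i, j, l} : Finset (Fin k)).card = 3 := by
      rw [Finset.card_insert_of_notMem (by simp [hij, hil]),
        Finset.card_insert_of_notMem (by simp [hjl]), Finset.card_singleton]
    have hy := h3 {i, j, l} hT
      (fun m => if m = i then p.1 else if m = j then p.2.1 else p.2.2)
    have hfilter : Finset.univ.filter (fun z : Fin k → Bool => (z i, z j, z l) = p)
        = Finset.univ.filter (fun z : Fin k → Bool => ∀ m ∈ ({i, j, l} : Finset (Fin k)),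
            z m = (fun m => if m = i then p.1 else if m = j then p.2.1 else p.2.2) m) := by
      apply Finset.filter_congr
      intro z _
      simp only [Finset.mem_insert, Finset.mem_singleton, Prod.ext_iff]
      constructor
      · rintro ⟨h1, h2, h3'⟩ m hm
        rcases hm with rfl | rfl | rfl <;>
          simp [h1, h2, h3', Ne.symm hij, Ne.symm hil, Ne.symm hjl]
      · intro h
        have e1 := h i (Or.inl rfl)
        have e2 := h j (Or.inr (Or.inl rfl))
        have e3 := h l (Or.inr (Or.inr rfl))
        simp only [if_pos rfl] at e1
        rw [if_neg (Ne.symm hij), if_pos rfl] at e2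
        rw [if_neg (Ne.symm hil), if_neg (Ne.symm hjl)] at e3
        exact ⟨e1, e2, e3⟩
    have hfib : ∑ z ∈ Finset.univ.filter (fun z : Fin k → Bool => (z i, z j, z l) = p), D z
        = 1/8 := by
      rw [hfilter, hy]; norm_num
    calc (∑ z ∈ Finset.univ.filter (fun z : Fin k → Bool => (z i, z j, z l) = p),
            D z * F (z i) (z j) (z l))
        = ∑ z ∈ Finset.univ.filter (fun z : Fin k → Bool => (z i, z j, z l) = p),
            D z * F p.1 p.2.1 p.2.2 := by
          refine Finset.sum_congr rfl fun z hz => ?_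
          simp only [Finset.mem_filter, Prod.ext_iff] at hz
          rw [hz.2.1, hz.2.2.1, hz.2.2.2]
      _ = (∑ z ∈ Finset.univ.filter (fun z : Fin k → Bool => (z i, z j, z l) = p), D z)
            * F p.1 p.2.1 p.2.2 := by rw [Finset.sum_mul]
      _ = F p.1 p.2.1 p.2.2 * (1/8) := by rw [hfib]; ring
  rw [Finset.sum_congr rfl fun p _ => step p]
  rw [Fintype.sum_prod_type]
  simp only [Fintype.sum_prod_type]
  rw [Finset.sum_div]
  refine Finset.sum_congr rfl fun a _ => ?_
  rw [Finset.sum_div]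
  refine Finset.sum_congr rfl fun b _ => ?_
  rw [Finset.sum_div]
  refine Finset.sum_congr rfl fun c _ => ?_
  ring

omit h3 in
lemma thr_exists_ne (hk : 5 ≤ k) (i j : Fin k) : ∃ l : Fin k, l ≠ i ∧ l ≠ j := by
  have hcard : ({i, j} : Finset (Fin k)).card < Fintype.card (Fin k) := by
    have h2 : ({i, j} : Finset (Fin k)).card ≤ 2 :=
      le_trans (Finset.card_insert_le _ _) (by simp)
    simp only [Fintype.card_fin]; omega
  have hss : ({i, j} : Finset (Fin k)) ⊂ Finset.univ :=
    Finset.ssubset_univ_iff.mpr (fun h => by simp [h, Finset.card_univ] at hcard)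
  obtain ⟨l, _, hl⟩ := Finset.exists_of_ssubset hss
  simp only [Finset.mem_insert, Finset.mem_singleton, not_or] at hl
  exact ⟨l, hl.1, hl.2⟩

lemma thr_A (hk : 5 ≤ k) (m : Fin k) : ∑ z, D z * eRR (z m) = 0 := by
  obtain ⟨j, hj, _⟩ := thr_exists_ne hk m m
  obtain ⟨l, hl1, hl2⟩ := thr_exists_ne hk m j
  have := thr_fiber D h3 m j l (Ne.symm hj) (Ne.symm hl1) (Ne.symm hl2)
    (fun a _ _ => eRR a)
  rw [this]
  norm_num [Fintype.sum_bool, eRR]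

lemma thr_B (hk : 5 ≤ k) (i j : Fin k) (hij : i ≠ j) :
    ∑ z, D z * (eRR (z i) * eRR (z j)) = 0 := by
  obtain ⟨l, hl1, hl2⟩ := thr_exists_ne hk i j
  have := thr_fiber D h3 i j l hij (Ne.symm hl1) (Ne.symm hl2)
    (fun a b _ => eRR a * eRR b)
  rw [this]
  norm_num [Fintype.sum_bool, eRR]

lemma thr_C (i j l : Fin k) (hij : i ≠ j) (hil : i ≠ l) (hjl : j ≠ l) :
    ∑ z, D z * (eRR (z i) * eRR (z j) * eRR (z l)) = 0 := by
  have := thr_fiber D h3 i j l hij hil hjl (fun a b c => eRR a * eRR b * eRR c)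
  rw [this]
  norm_num [Fintype.sum_bool, eRR]

lemma thr_M1 (hk : 5 ≤ k) : ∑ z, D z * (∑ i, eRR (z i)) = 0 := by
  calc ∑ z, D z * (∑ i, eRR (z i)) = ∑ z, ∑ i, D z * eRR (z i) := by
        exact Finset.sum_congr rfl fun z _ => Finset.mul_sum _ _ _
    _ = ∑ i, ∑ z, D z * eRR (z i) := Finset.sum_comm
    _ = 0 := by
        rw [Finset.sum_congr rfl fun i _ => thr_A D h3 hk i]; simp

lemma thr_M2 (hk : 5 ≤ k) (hsum : ∑ z, D z = 1) :
    ∑ z, D z * (∑ i, eRR (z i))^2 = k := by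
  have expand : ∀ z : Fin k → Bool, D z * (∑ i, eRR (z i))^2
      = ∑ i, ∑ j, D z * (eRR (z i) * eRR (z j)) := by
    intro z
    rw [sq, Finset.sum_mul_sum]
    rw [Finset.mul_sum]
    exact Finset.sum_congr rfl fun i _ => Finset.mul_sum _ _ _
  calc ∑ z, D z * (∑ i, eRR (z i))^2
      = ∑ z, ∑ i, ∑ j, D z * (eRR (z i) * eRR (z j)) :=
        Finset.sum_congr rfl fun z _ => expand z
    _ = ∑ i, ∑ z, ∑ j, D z * (eRR (z i) * eRR (z j)) := Finset.sum_comm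
    _ = ∑ i, ∑ j, ∑ z, D z * (eRR (z i) * eRR (z j)) :=
        Finset.sum_congr rfl fun i _ => Finset.sum_comm
    _ = ∑ i : Fin k, ∑ j : Fin k, (if i = j then (1:ℝ) else 0) := by
        refine Finset.sum_congr rfl fun i _ => Finset.sum_congr rfl fun j _ => ?_
        by_cases h : i = j
        · subst h
          simp only [if_pos rfl]
          calc ∑ z, D z * (eRR (z i) * eRR (z i)) = ∑ z, D z := by
                refine Finset.sum_congr rfl fun z _ => ?_
                rw [eRR_sq, mul_one]
            _ = 1 := hsum
        · rw [if_neg h]; exact thr_B D h3 hk i j h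
    _ = k := by simp [Finset.sum_ite_eq, Finset.card_univ]

lemma thr_M3 (hk : 5 ≤ k) : ∑ z, D z * (∑ i, eRR (z i))^3 = 0 := by
  have expand : ∀ z : Fin k → Bool, D z * (∑ i, eRR (z i))^3
      = ∑ i, ∑ j, ∑ l, D z * (eRR (z i) * eRR (z j) * eRR (z l)) := by
    intro z
    have h1 : (∑ i, eRR (z i))^3
        = ∑ i, ∑ j, ∑ l, eRR (z i) * eRR (z j) * eRR (z l) := by
      calc (∑ i, eRR (z i))^3
          = ((∑ i, eRR (z i)) * (∑ j, eRR (z j))) * (∑ l, eRR (z l)) := by ring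
        _ = (∑ i, ∑ j, eRR (z i) * eRR (z j)) * (∑ l, eRR (z l)) := by
            rw [Finset.sum_mul_sum]
        _ = ∑ i, ∑ j, ∑ l, eRR (z i) * eRR (z j) * eRR (z l) := by
            rw [Finset.sum_mul]
            refine Finset.sum_congr rfl fun i _ => ?_
            rw [Finset.sum_mul]
            exact Finset.sum_congr rfl fun j _ => Finset.mul_sum _ _ _
    rw [h1, Finset.mul_sum]
    refine Finset.sum_congr rfl fun i _ => ?_
    rw [Finset.mul_sum]
    exact Finset.sum_congr rfl fun j _ => Finset.mul_sum _ _ _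
  calc ∑ z, D z * (∑ i, eRR (z i))^3
      = ∑ z, ∑ i, ∑ j, ∑ l, D z * (eRR (z i) * eRR (z j) * eRR (z l)) :=
        Finset.sum_congr rfl fun z _ => expand z
    _ = ∑ i, ∑ z, ∑ j, ∑ l, D z * (eRR (z i) * eRR (z j) * eRR (z l)) := Finset.sum_comm
    _ = ∑ i, ∑ j, ∑ z, ∑ l, D z * (eRR (z i) * eRR (z j) * eRR (z l)) :=
        Finset.sum_congr rfl fun i _ => Finset.sum_comm
    _ = ∑ i, ∑ j, ∑ l, ∑ z, D z * (eRR (z i) * eRR (z j) * eRR (z l)) :=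
        Finset.sum_congr rfl fun i _ => Finset.sum_congr rfl fun j _ => Finset.sum_comm
    _ = 0 := by
        refine Finset.sum_eq_zero fun i _ => Finset.sum_eq_zero fun j _ =>
          Finset.sum_eq_zero fun l _ => ?_
        by_cases hij : i = j
        · subst hij
          calc ∑ z, D z * (eRR (z i) * eRR (z i) * eRR (z l))
              = ∑ z, D z * eRR (z l) := by
                refine Finset.sum_congr rfl fun z _ => ?_
                rw [eRR_sq, one_mul]
            _ = 0 := thr_A D h3 hk l
        · by_cases hil : i = l
          · subst hil
            calc ∑ z, D z * (eRR (z i) * eRR (z j) * eRR (z i))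
                = ∑ z, D z * eRR (z j) := by
                  refine Finset.sum_congr rfl fun z _ => ?_
                  rw [show eRR (z i) * eRR (z j) * eRR (z i) = eRR (z j) from by
                    rw [mul_comm (eRR (z i)) (eRR (z j)), mul_assoc, eRR_sq, mul_one]]
              _ = 0 := thr_A D h3 hk j
          · by_cases hjl : j = l
            · subst hjl
              calc ∑ z, D z * (eRR (z i) * eRR (z j) * eRR (z j))
                  = ∑ z, D z * eRR (z i) := by
                    refine Finset.sum_congr rfl fun z _ => ?_
                    rw [mul_assoc, eRR_sq, mul_one]
                _ = 0 := thr_A D h3 hk i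
            · exact thr_C D h3 i j l hij hil hjl

end Moments

section Main
variable {k : ℕ}

lemma thr_cast (z : Fin k → Bool) :
    (∑ i, eRR (z i)) = ((∑ i, (if z i then (1:ℤ) else -1) : ℤ) : ℝ) := by
  push_cast
  refine Finset.sum_congr rfl fun i _ => ?_
  by_cases h : z i <;> simp [eRR, h]

lemma thr_lb (z : Fin k → Bool) : -(k:ℝ) ≤ ∑ i, eRR (z i) := by
  have : ∑ _i : Fin k, (-1:ℝ) ≤ ∑ i, eRR (z i) := by
    refine Finset.sum_le_sum fun i _ => ?_
    by_cases h : z i <;> simp [eRR, h]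
  simpa using this

lemma thr_main (hk : 5 ≤ k) (D : (Fin k → Bool) → ℝ)
    (hpos : ∀ z, 0 ≤ D z) (hsum : ∑ z, D z = 1)
    (hM1 : ∑ z, D z * (∑ i, eRR (z i)) = 0)
    (hM2 : ∑ z, D z * (∑ i, eRR (z i))^2 = k)
    (hM3 : ∑ z, D z * (∑ i, eRR (z i))^3 = 0) :
    6 / ((k:ℝ)^4 + 7*(k:ℝ)^3 - 13*(k:ℝ)^2 - (k:ℝ) + 6)
      ≤ ∑ z ∈ Finset.univ.filter
          (fun z : Fin k → Bool => ¬ ((-1 : ℤ) ≤ ∑ i, (if z i then (1:ℤ) else -1))),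
          D z := by
  have hk5 : (5:ℝ) ≤ (k:ℝ) := by exact_mod_cast hk
  set K : ℝ := (k:ℝ) with hK
  set sR : (Fin k → Bool) → ℝ := fun z => ∑ i, eRR (z i) with hsR
  set Nf : (Fin k → Bool) → ℝ := fun z =>
    (K+1)*(sR z)^3 - 3*(K-1)*(sR z)^2 + (3*K^2-7*K-4)*(sR z) + (3*K^2-3*K) with hNf
  have hEN : ∑ z, D z * Nf z = 0 := by
    have hexp : ∑ z, D z * Nf z
        = (K+1) * (∑ z, D z * (sR z)^3) - 3*(K-1) * (∑ z, D z * (sR z)^2)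
          + (3*K^2-7*K-4) * (∑ z, D z * sR z) + (3*K^2-3*K) * (∑ z, D z) := by
      rw [Finset.mul_sum, Finset.mul_sum, Finset.mul_sum, Finset.mul_sum,
        ← Finset.sum_sub_distrib, ← Finset.sum_add_distrib, ← Finset.sum_add_distrib]
      exact Finset.sum_congr rfl fun z _ => by simp only [hNf]; ring
    rw [hexp, hM1, hM2, hM3, hsum]; ring
  set P : (Fin k → Bool) → Prop :=
    fun z => (-1 : ℤ) ≤ ∑ i, (if z i then (1:ℤ) else -1) with hP
  have hsplit : (∑ z ∈ Finset.univ.filter P, D z)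
      + (∑ z ∈ Finset.univ.filter (fun z => ¬ P z), D z) = 1 := by
    rw [Finset.sum_filter_add_sum_filter_not]; exact hsum
  have hNsplit : (∑ z ∈ Finset.univ.filter P, D z * Nf z)
      + (∑ z ∈ Finset.univ.filter (fun z => ¬ P z), D z * Nf z) = 0 := by
    rw [Finset.sum_filter_add_sum_filter_not]; exact hEN
  set p : ℝ := ∑ z ∈ Finset.univ.filter (fun z => ¬ P z), D z with hp
  set q : ℝ := ∑ z ∈ Finset.univ.filter P, D z with hq
  have hgood : 6 * q ≤ ∑ z ∈ Finset.univ.filter P, D z * Nf z := by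
    rw [hq, Finset.mul_sum]
    refine Finset.sum_le_sum fun z hz => ?_
    simp only [Finset.mem_filter] at hz
    have hs1 : (-1:ℝ) ≤ sR z := by
      rw [hsR]; simp only []; rw [thr_cast z]
      exact_mod_cast hz.2
    have h6 : 6 ≤ Nf z := thr_poly_good K (sR z) hk5 hs1
    calc 6 * D z = D z * 6 := by ring
      _ ≤ D z * Nf z := mul_le_mul_of_nonneg_left h6 (hpos z)
  have hbad : -(K^4+7*K^3-13*K^2-K) * p
      ≤ ∑ z ∈ Finset.univ.filter (fun z => ¬ P z), D z * Nf z := by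
    rw [hp, Finset.mul_sum]
    refine Finset.sum_le_sum fun z _ => ?_
    have hsk : -K ≤ sR z := thr_lb z
    have hlow : -(K^4+7*K^3-13*K^2-K) ≤ Nf z := thr_poly_bad K (sR z) hk5 hsk
    calc -(K^4+7*K^3-13*K^2-K) * D z = D z * (-(K^4+7*K^3-13*K^2-K)) := by ring
      _ ≤ D z * Nf z := mul_le_mul_of_nonneg_left hlow (hpos z)
  have hden : (0:ℝ) < K^4 + 7*K^3 - 13*K^2 - K + 6 := by nlinarith [hk5, sq_nonneg (K-5)]
  rw [div_le_iff₀ hden]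
  nlinarith [hgood, hbad, hNsplit, hsplit]

end Main

/-- for odd `k ≥ 5`, the predicate `THR_k^{-1}` (true iff the signed
Hamming weight is ≥ −1) is `6/(k⁴+7k³−13k²−k+6)`-far from supporting a 3-wise uniform
distribution; in particular it does not support any 3-wise uniform distribution. -/
theorem thr_far_from_threewise (k : ℕ) (hodd : Odd k) (hk : 5 ≤ k) :
    (∀ D : (Fin k → Bool) → ℝ,
        (∀ z, 0 ≤ D z) → (∑ z, D z = 1) →
        (∀ T : Finset (Fin k), T.card = 3 → ∀ y : Fin k → Bool,
          ∑ z ∈ Finset.univ.filter (fun z : Fin k → Bool => ∀ i ∈ T, z i = y i), D z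
            = 1 / 2 ^ 3) →
        6 / ((k:ℝ)^4 + 7*(k:ℝ)^3 - 13*(k:ℝ)^2 - (k:ℝ) + 6)
          ≤ ∑ z ∈ Finset.univ.filter
              (fun z : Fin k → Bool => ¬ ((-1 : ℤ) ≤ ∑ i, (if z i then (1:ℤ) else -1))),
              D z) ∧
    ¬ ∃ D : (Fin k → Bool) → ℝ,
        (∀ z, 0 ≤ D z) ∧ (∑ z, D z = 1) ∧
        (∀ T : Finset (Fin k), T.card = 3 → ∀ y : Fin k → Bool,
          ∑ z ∈ Finset.univ.filter (fun z : Fin k → Bool => ∀ i ∈ T, z i = y i), D z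
            = 1 / 2 ^ 3) ∧
        (∀ z, D z ≠ 0 → (-1 : ℤ) ≤ ∑ i, (if z i then (1:ℤ) else -1)) := by
  have main : ∀ D : (Fin k → Bool) → ℝ,
      (∀ z, 0 ≤ D z) → (∑ z, D z = 1) →
      (∀ T : Finset (Fin k), T.card = 3 → ∀ y : Fin k → Bool,
        ∑ z ∈ Finset.univ.filter (fun z : Fin k → Bool => ∀ i ∈ T, z i = y i), D z
          = 1 / 2 ^ 3) →
      6 / ((k:ℝ)^4 + 7*(k:ℝ)^3 - 13*(k:ℝ)^2 - (k:ℝ) + 6)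
        ≤ ∑ z ∈ Finset.univ.filter
            (fun z : Fin k → Bool => ¬ ((-1 : ℤ) ≤ ∑ i, (if z i then (1:ℤ) else -1))),
            D z := by
    intro D hpos hsum h3
    exact thr_main hk D hpos hsum (thr_M1 D h3 hk) (thr_M2 D h3 hk hsum) (thr_M3 D h3 hk)
  refine ⟨main, ?_⟩
  rintro ⟨D, hpos, hsum, h3, hsupp⟩
  have h := main D hpos hsum h3
  have hzero : ∑ z ∈ Finset.univ.filter
      (fun z : Fin k → Bool => ¬ ((-1 : ℤ) ≤ ∑ i, (if z i then (1:ℤ) else -1))), D z = 0 := by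
    refine Finset.sum_eq_zero fun z hz => ?_
    simp only [Finset.mem_filter] at hz
    by_contra hne
    exact hz.2 (hsupp z hne)
  rw [hzero] at h
  have hk5 : (5:ℝ) ≤ (k:ℝ) := by exact_mod_cast hk
  have hden : (0:ℝ) < (k:ℝ)^4 + 7*(k:ℝ)^3 - 13*(k:ℝ)^2 - (k:ℝ) + 6 := by
    nlinarith [hk5, sq_nonneg ((k:ℝ)-5)]
  have : (0:ℝ) < 6 / ((k:ℝ)^4 + 7*(k:ℝ)^3 - 13*(k:ℝ)^2 - (k:ℝ) + 6) :=
    div_pos (by norm_num) hden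
  linarith
end

section
/- Define Q_u(σ) = (1/54)[3σ⁴ − 5σ³ + (−18 + 24/k)σ² + (31 − 10/k)σ + 9 − 18/k] for k ≥ 25. Then Q_u(σ) > −8/9 for all σ ∈ ℝ, and Q_u(σ) > 1/8 for all σ ≥ 0. -/
/-- for `k ≥ 25`, the univariate polynomial
`Q_u(σ) = (1/54)[3σ⁴ − 5σ³ + (−18 + 24/k)σ² + (31 − 10/k)σ + 9 − 18/k]`
satisfies `Q_u(σ) > −8/9` for all real `σ`, and `Q_u(σ) > 1/8` for all `σ ≥ 0`. -/
theorem maj_univariate_bounds (k : ℝ) (hk : 25 ≤ k) :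
    (∀ σ : ℝ, -8/9 <
      (1/54) * (3*σ^4 - 5*σ^3 + (-18 + 24/k)*σ^2 + (31 - 10/k)*σ + 9 - 18/k)) ∧
    (∀ σ : ℝ, 0 ≤ σ → 1/8 <
      (1/54) * (3*σ^4 - 5*σ^3 + (-18 + 24/k)*σ^2 + (31 - 10/k)*σ + 9 - 18/k)) := by
  have hk0 : (0:ℝ) < k := by linarith
  have ht : 0 < 1/k := by positivity
  have ht2 : 1/k ≤ 1/25 := by
    rw [div_le_div_iff₀ hk0 (by norm_num)]; linarith
  set t := 1/k with htdef
  have hdiv : ∀ c : ℝ, c / k = c * t := fun c => by rw [htdef]; ring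
  constructor
  · intro σ
    rw [hdiv, hdiv, hdiv]
    nlinarith [sq_nonneg ((σ+29/18)*(σ-22/9)), sq_nonneg (σ+1832/1149),
      sq_nonneg (σ-5/24), sq_nonneg σ, sq_nonneg (σ-1), sq_nonneg (σ+1), sq_nonneg (σ^2-4),
      mul_nonneg ht.le (sq_nonneg (σ-5/24)), mul_nonneg ht.le (sq_nonneg σ)]
  · intro σ hσ
    rw [hdiv, hdiv, hdiv]
    nlinarith [sq_nonneg ((σ-1/4)*(σ-25/12)), sq_nonneg (σ-839/410),
      mul_nonneg hσ (sq_nonneg (σ-21/10)), mul_nonneg ht.le (sq_nonneg σ),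
      mul_nonneg ht.le hσ, sq_nonneg σ]
end

section
/- For k ≥ 99 odd, define Q_u(σ) = (1/3)σ⁴ + (1/3)σ³ − (7/4)σ² + (1/2)σ + 3/4 + (1/k)((8/3)σ² + (2/3)σ − 2). Then Q_u(σ) > 1/48 for all σ ≥ −1/2, and Q_u(σ) ≥ −14/3 for all σ ∈ ℝ. -/
/-- for odd `k ≥ 99`, the univariate polynomial
`Q_u(σ) = (1/3)σ⁴ + (1/3)σ³ − (7/4)σ² + (1/2)σ + 3/4 + (1/k)((8/3)σ² + (2/3)σ − 2)`
satisfies `Q_u(σ) > 1/48` for all `σ ≥ −1/2`, and `Q_u(σ) ≥ −14/3` for all real `σ`. -/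
theorem thr_sqrt_univariate_bounds (k : ℕ) (hodd : Odd k) (hk : 99 ≤ k) :
    (∀ σ : ℝ, -1/2 ≤ σ → (1:ℝ)/48 <
      (1/3)*σ^4 + (1/3)*σ^3 - (7/4)*σ^2 + (1/2)*σ + 3/4
        + (1/(k:ℝ)) * ((8/3)*σ^2 + (2/3)*σ - 2)) ∧
    (∀ σ : ℝ, -14/3 ≤
      (1/3)*σ^4 + (1/3)*σ^3 - (7/4)*σ^2 + (1/2)*σ + 3/4
        + (1/(k:ℝ)) * ((8/3)*σ^2 + (2/3)*σ - 2)) := by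
  have hk' : (99:ℝ) ≤ (k:ℝ) := by exact_mod_cast hk
  have hkpos : (0:ℝ) < (k:ℝ) := by linarith
  have hinv : (1:ℝ)/(k:ℝ) ≤ 1/99 := by
    apply div_le_div_of_nonneg_left (by norm_num) (by norm_num) hk'
  have hinvpos : (0:ℝ) < 1/(k:ℝ) := by positivity
  have hE : ∀ σ : ℝ, -49/2376 ≤ (1/(k:ℝ)) * ((8/3)*σ^2 + (2/3)*σ - 2) := by
    intro σ
    have h1 : (-49/24 : ℝ) ≤ (8/3)*σ^2 + (2/3)*σ - 2 := by nlinarith [sq_nonneg (σ + 1/8)]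
    nlinarith [mul_le_mul_of_nonneg_left h1 (le_of_lt hinvpos),
      mul_le_mul_of_nonneg_right hinv (show (0:ℝ) ≤ 49/24 by norm_num)]
  constructor
  · intro σ hσ
    have hE' := hE σ
    nlinarith [sq_nonneg (σ - 35/29), sq_nonneg (σ + 4631/3538), sq_nonneg σ,
      mul_nonneg (mul_nonneg (sq_nonneg (σ - 35/29)) (by linarith : (0:ℝ) ≤ σ + 1/2)) (by linarith : (0:ℝ) ≤ σ + 200/69),
      mul_nonneg (by linarith : (0:ℝ) ≤ σ + 1/2) (sq_nonneg (σ + 4631/3538))]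
  · intro σ
    have hE' := hE σ
    nlinarith [sq_nonneg ((σ + 19/9) * (σ - 29/18)), sq_nonneg (σ + 397/211), sq_nonneg σ]
end

section
/- For k ≥ 99 odd, the predicate THR_k^{−√k/2} : {-1,1}^k → {0,1} (satisfied iff Σ_{i=1}^k z_i ≥ −√k/2) is (1/225)-far from supporting a 4-wise uniform distribution. -/
open Classical

/-! Auxiliary definitions and lemmas. -/

noncomputable def chiR (b : Bool) : ℝ := if b then 1 else -1

lemma chiR_sq (b : Bool) : chiR b * chiR b = 1 := by cases b <;> simp [chiR]

lemma poly_bound_all (t : ℝ) :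
    -(11039/2376 : ℝ) ≤ t^4/3 + t^3/3 - 7*t^2/4 + t/2 + 3/4 := by
  nlinarith [sq_nonneg (t^2 + t/2 - 17/5), sq_nonneg (t + 49/26)]

lemma poly_bound_pos (t : ℝ) (ht : -(1/2 : ℝ) ≤ t) :
    (1/24 : ℝ) ≤ t^4/3 + t^3/3 - 7*t^2/4 + t/2 + 3/4 := by
  have h29 : (0:ℝ) ≤ 10*t + 29 := by linarith
  have hg : (0:ℝ) ≤ 8*t^3 + 4*t^2 - 44*t + 34 := by
    nlinarith [mul_nonneg (sq_nonneg (5*t - 6)) h29]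
  nlinarith [mul_nonneg (by linarith : (0:ℝ) ≤ 2*t+1) hg]

lemma err_bound (t : ℝ) : -(49/8 : ℝ) ≤ 8*t^2 + 2*t - 6 := by nlinarith [sq_nonneg (8*t+1)]

noncomputable def qform (s r : ℝ) : ℝ :=
  (3/(2*r))*s + (s^2 - r^2)/(4*r^2) + (s^3 - (3*r^2-2)*s)/(3*r^3)
    + (s^4 - (6*r^2-8)*s^2 + 3*(r^2)^2 - 6*r^2)/(3*(r^2)^2)

lemma qform_eq (s r : ℝ) (hr : r ≠ 0) :
    qform s r = (s/r)^4/3 + (s/r)^3/3 - 7*(s/r)^2/4 + (s/r)/2 + 3/4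
      + (8*(s/r)^2 + 2*(s/r) - 6)/(3*r^2) := by
  unfold qform
  field_simp
  ring

lemma qform_err (s r : ℝ) (hr : 0 < r) (hr99 : (99:ℝ) ≤ r^2) :
    -(49/2376 : ℝ) ≤ (8*(s/r)^2 + 2*(s/r) - 6)/(3*r^2) := by
  set t := s / r
  have h1 : (-(49/8):ℝ)/(3*r^2) ≤ (8*t^2 + 2*t - 6)/(3*r^2) :=
    (div_le_div_iff_of_pos_right (by positivity)).mpr (err_bound t)
  have h2 : (-(49/2376):ℝ) ≤ (-(49/8):ℝ)/(3*r^2) := by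
    rw [neg_div, neg_le_neg_iff, div_le_div_iff₀ (by positivity) (by norm_num)]
    nlinarith
  linarith

lemma q_bound_all (s r : ℝ) (hr : 0 < r) (hr99 : (99:ℝ) ≤ r^2) :
    -(14/3 : ℝ) ≤ qform s r := by
  rw [qform_eq s r (ne_of_gt hr)]
  have := poly_bound_all (s/r)
  have := qform_err s r hr hr99
  linarith

lemma q_bound_pos (s r : ℝ) (hr : 0 < r) (hr99 : (99:ℝ) ≤ r^2) (hs : -r/2 ≤ s) :
    (25/1188 : ℝ) ≤ qform s r := by
  have ht : -(1/2:ℝ) ≤ s/r := by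
    rw [le_div_iff₀ hr]; nlinarith
  rw [qform_eq s r (ne_of_gt hr)]
  have := poly_bound_pos (s/r) ht
  have := qform_err s r hr hr99
  linarith

lemma esymm_insert {ι : Type*} [DecidableEq ι] (a : ι → ℝ) {x : ι} {F : Finset ι}
    (hx : x ∉ F) (n : ℕ) :
    ∑ S ∈ (insert x F).powersetCard (n+1), ∏ i ∈ S, a i
      = (∑ S ∈ F.powersetCard (n+1), ∏ i ∈ S, a i)
        + a x * ∑ S ∈ F.powersetCard n, ∏ i ∈ S, a i := by
  have hnot : ∀ {m : ℕ} {S : Finset ι}, S ∈ F.powersetCard m → x ∉ S := by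
    intro m S hS hxS
    exact hx ((Finset.mem_powersetCard.mp hS).1 hxS)
  rw [Finset.powersetCard_succ_insert hx, Finset.sum_union, Finset.sum_image]
  · congr 1
    rw [Finset.mul_sum]
    exact Finset.sum_congr rfl fun S hS => Finset.prod_insert (hnot hS)
  · intro S hS S' hS' h
    rw [← Finset.erase_insert (hnot hS), ← Finset.erase_insert (hnot hS'), h]
  · rw [Finset.disjoint_right]
    intro S hS hS2
    obtain ⟨S', hS', rfl⟩ := Finset.mem_image.mp hS
    exact hnot hS2 (Finset.mem_insert_self x S')

lemma esymm_vals {ι : Type*} [DecidableEq ι] (a : ι → ℝ) (F : Finset ι)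
    (ha : ∀ i ∈ F, a i * a i = 1) :
    (∑ S ∈ F.powersetCard 1, ∏ i ∈ S, a i) = (∑ i ∈ F, a i) ∧
    (∑ S ∈ F.powersetCard 2, ∏ i ∈ S, a i) = ((∑ i ∈ F, a i)^2 - (F.card:ℝ))/2 ∧
    (∑ S ∈ F.powersetCard 3, ∏ i ∈ S, a i)
      = ((∑ i ∈ F, a i)^3 - (3*(F.card:ℝ)-2)*(∑ i ∈ F, a i))/6 ∧
    (∑ S ∈ F.powersetCard 4, ∏ i ∈ S, a i)
      = ((∑ i ∈ F, a i)^4 - (6*(F.card:ℝ)-8)*(∑ i ∈ F, a i)^2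
          + 3*(F.card:ℝ)^2 - 6*(F.card:ℝ))/24 := by
  induction F using Finset.induction_on with
  | empty =>
    have h : ∀ n : ℕ, 0 < n → (∅ : Finset ι).powersetCard n = ∅ := by
      intro n hn; ext S
      simp only [Finset.mem_powersetCard, Finset.subset_empty, Finset.notMem_empty, iff_false,
        not_and]
      rintro rfl
      simp only [Finset.card_empty]
      omega
    simp only [h 1 (by norm_num), h 2 (by norm_num), h 3 (by norm_num), h 4 (by norm_num)]
    norm_num
  | @insert x F hx ih =>
    obtain ⟨i1, i2, i3, i4⟩ := ih (fun i hi => ha i (Finset.mem_insert_of_mem hi))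
    have hu : a x * a x = 1 := ha x (Finset.mem_insert_self x F)
    have he0 : (∑ S ∈ F.powersetCard 0, ∏ i ∈ S, a i) = 1 := by
      rw [Finset.powersetCard_zero]; simp
    have hcard : ((insert x F).card : ℝ) = (F.card : ℝ) + 1 := by
      rw [Finset.card_insert_of_notMem hx]; push_cast; ring
    have hsum : (∑ i ∈ insert x F, a i) = a x + ∑ i ∈ F, a i := Finset.sum_insert hx
    have H1 := esymm_insert a hx 0
    have H2 := esymm_insert a hx 1
    have H3 := esymm_insert a hx 2
    have H4 := esymm_insert a hx 3
    norm_num at H1 H2 H3 H4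
    refine ⟨?_, ?_, ?_, ?_⟩
    · rw [H1, hsum, i1]; ring
    · rw [H2, hsum, hcard, i1, i2]
      rcases mul_self_eq_one_iff.mp hu with h | h <;> rw [h] <;> ring
    · rw [H3, hsum, hcard, i2, i3]
      rcases mul_self_eq_one_iff.mp hu with h | h <;> rw [h] <;> ring
    · rw [H4, hsum, hcard, i3, i4]
      rcases mul_self_eq_one_iff.mp hu with h | h <;> rw [h] <;> ring

lemma moment_lemma (k : ℕ) (hk4 : 4 ≤ k) (D : (Fin k → Bool) → ℝ)
    (hD4 : ∀ T : Finset (Fin k), T.card = 4 → ∀ y : Fin k → Bool,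
        ∑ z ∈ Finset.univ.filter (fun z : Fin k → Bool => ∀ i ∈ T, z i = y i), D z
          = 1 / 2 ^ 4)
    (S : Finset (Fin k)) (hS : S.Nonempty) (hS4 : S.card ≤ 4) :
    ∑ z : Fin k → Bool, D z * ∏ i ∈ S, chiR (z i) = 0 := by
  obtain ⟨T, hST, -, hT4⟩ :=
    Finset.exists_subsuperset_card_eq (Finset.subset_univ S) hS4 (by simpa using hk4)
  classical
  set g : (Fin k → Bool) → (Fin k → Bool) :=
    fun z i => if i ∈ T then z i else false with hg
  set h : Fin k → Bool → ℝ :=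
    fun i b => if i ∈ S then chiR b / 2 else if i ∈ T then (1:ℝ)/2 else if b then 0 else 1
    with hh
  have key : ∀ y : Fin k → Bool,
      (∑ z ∈ Finset.univ.filter (fun z => g z = y), D z * ∏ i ∈ S, chiR (z i))
        = ∏ i, h i (y i) := by
    intro y
    by_cases hsupp : ∀ i, i ∉ T → y i = false
    · have hfilter : (Finset.univ.filter (fun z => g z = y))
          = Finset.univ.filter (fun z : Fin k → Bool => ∀ i ∈ T, z i = y i) := by
        ext z
        simp only [Finset.mem_filter, Finset.mem_univ, true_and, funext_iff, hg]
        constructor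
        · intro hz i hi
          have := hz i
          simpa [hi] using this
        · intro hz i
          by_cases hi : i ∈ T
          · simpa [hi] using hz i hi
          · simp [hi, hsupp i hi]
      have hprodz : ∀ z ∈ Finset.univ.filter (fun z : Fin k → Bool => ∀ i ∈ T, z i = y i),
          D z * ∏ i ∈ S, chiR (z i) = D z * ∏ i ∈ S, chiR (y i) := by
        intro z hz
        rw [Finset.mem_filter] at hz
        congr 1
        exact Finset.prod_congr rfl fun i hi => by rw [hz.2 i (hST hi)]
      rw [hfilter, Finset.sum_congr rfl hprodz, ← Finset.sum_mul, hD4 T hT4 y]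
      have hcompl : ∏ i ∈ Tᶜ, h i (y i) = 1 := by
        apply Finset.prod_eq_one
        intro i hi
        rw [Finset.mem_compl] at hi
        have : i ∉ S := fun c => hi (hST c)
        simp [hh, this, hi, hsupp i hi]
      have hT' : ∏ i ∈ T, h i (y i)
          = (∏ i ∈ S, chiR (y i)) * (1/2)^4 := by
        rw [← Finset.prod_sdiff hST]
        have h1 : ∏ i ∈ T \ S, h i (y i) = (1/2 : ℝ)^((T \ S).card) := by
          rw [Finset.prod_congr rfl (fun i hi => ?_), Finset.prod_const]
          rw [Finset.mem_sdiff] at hi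
          simp [hh, hi.2, hi.1]
        have h2 : ∏ i ∈ S, h i (y i) = (∏ i ∈ S, chiR (y i)) * (1/2 : ℝ)^(S.card) := by
          rw [Finset.prod_congr rfl (fun i hi => show h i (y i) = chiR (y i) * (1/2) by
            simp [hh, hi]; ring), Finset.prod_mul_distrib, Finset.prod_const]
        rw [h1, h2, Finset.card_sdiff_of_subset hST, hT4]
        rw [mul_comm ((1/2:ℝ)^(4 - S.card)), mul_assoc, ← pow_add]
        rw [Nat.add_sub_cancel' hS4]
      calc (1:ℝ)/2^4 * ∏ i ∈ S, chiR (y i)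
          = (∏ i ∈ T, h i (y i)) * ∏ i ∈ Tᶜ, h i (y i) := by
            rw [hcompl, hT']; ring
        _ = ∏ i, h i (y i) := Finset.prod_mul_prod_compl T _
    · push_neg at hsupp
      obtain ⟨i0, hi0T, hi0⟩ := hsupp
      have hyi0 : y i0 = true := by
        cases hy : y i0
        · exact absurd hy hi0
        · rfl
      have hempty : (Finset.univ.filter (fun z => g z = y)) = ∅ := by
        apply Finset.filter_false_of_mem
        intro z _
        intro hc
        have := congrFun hc i0
        rw [hg] at this
        simp only [hi0T, if_false] at this
        rw [hyi0] at this
        exact Bool.false_ne_true this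
      rw [hempty, Finset.sum_empty]
      have : i0 ∉ S := fun c => hi0T (hST c)
      refine (Finset.prod_eq_zero (Finset.mem_univ i0) ?_).symm
      simp [hh, this, hi0T, hyi0]
  calc ∑ z : Fin k → Bool, D z * ∏ i ∈ S, chiR (z i)
      = ∑ y : Fin k → Bool, ∑ z ∈ Finset.univ.filter (fun z => g z = y),
          D z * ∏ i ∈ S, chiR (z i) := (Finset.sum_fiberwise _ _ _).symm
    _ = ∑ y : Fin k → Bool, ∏ i, h i (y i) := Finset.sum_congr rfl fun y _ => key y
    _ = ∏ i, (h i false + h i true) := by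
        rw [← Fintype.piFinset_univ, Finset.sum_prod_piFinset]
        exact Finset.prod_congr rfl fun i _ => by rw [Fintype.sum_bool]; ring
    _ = 0 := by
        obtain ⟨i0, hi0⟩ := hS
        refine Finset.prod_eq_zero (Finset.mem_univ i0) ?_
        simp [hh, hi0, chiR]
        norm_num

/-- for odd `k ≥ 99`, the predicate `THR_k^{−√k/2}` (true iff the signed
Hamming weight is ≥ −√k/2) is `(1/225)`-far from supporting a 4-wise uniform
distribution. -/
theorem thr_sqrt_far_from_fourwise (k : ℕ) (hodd : Odd k) (hk : 99 ≤ k) :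
    ∀ D : (Fin k → Bool) → ℝ,
      (∀ z, 0 ≤ D z) → (∑ z, D z = 1) →
      (∀ T : Finset (Fin k), T.card = 4 → ∀ y : Fin k → Bool,
        ∑ z ∈ Finset.univ.filter (fun z : Fin k → Bool => ∀ i ∈ T, z i = y i), D z
          = 1 / 2 ^ 4) →
      (1 : ℝ) / 225
        ≤ ∑ z ∈ Finset.univ.filter
            (fun z : Fin k → Bool =>
              ¬ (-(Real.sqrt k)/2 ≤ ∑ i, (if z i then (1:ℝ) else -1))),
            D z := by
  intro D hD0 hDsum hD4
  have hk4 : 4 ≤ k := by omega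
  have hkpos : 0 < k := by omega
  have hk0 : (0:ℝ) < k := by exact_mod_cast hkpos
  set r := Real.sqrt k with hrdef
  have hr2 : r^2 = k := Real.sq_sqrt (le_of_lt hk0)
  have hr0 : 0 < r := Real.sqrt_pos.mpr hk0
  have hr99 : (99:ℝ) ≤ r^2 := by rw [hr2]; exact_mod_cast hk
  -- the dual polynomial
  set Q : (Fin k → Bool) → ℝ := fun z =>
    (3/(2*r)) * (∑ S ∈ Finset.univ.powersetCard 1, ∏ i ∈ S, chiR (z i))
    + (1/(2*(k:ℝ))) * (∑ S ∈ Finset.univ.powersetCard 2, ∏ i ∈ S, chiR (z i))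
    + (2/r^3) * (∑ S ∈ Finset.univ.powersetCard 3, ∏ i ∈ S, chiR (z i))
    + (8/(k:ℝ)^2) * (∑ S ∈ Finset.univ.powersetCard 4, ∏ i ∈ S, chiR (z i)) with hQ
  have hQform : ∀ z : Fin k → Bool, Q z = qform (∑ i, chiR (z i)) r := by
    intro z
    obtain ⟨e1, e2, e3, e4⟩ :=
      esymm_vals (fun i => chiR (z i)) Finset.univ (fun i _ => chiR_sq _)
    have hcard : (((Finset.univ : Finset (Fin k)).card : ℕ) : ℝ) = (k : ℝ) := by
      rw [Finset.card_univ, Fintype.card_fin]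
    rw [hQ]
    simp only [e1, e2, e3, e4, hcard]
    rw [← hr2]
    unfold qform
    field_simp
    ring
  -- expectations of the elementary symmetric parts vanish
  have hmom : ∀ j : ℕ, 1 ≤ j → j ≤ 4 →
      ∑ z : Fin k → Bool,
        D z * (∑ S ∈ Finset.univ.powersetCard j, ∏ i ∈ S, chiR (z i)) = 0 := by
    intro j hj1 hj4
    rw [Finset.sum_congr rfl (fun z _ => Finset.mul_sum _ _ _), Finset.sum_comm]
    apply Finset.sum_eq_zero
    intro S hS
    rw [Finset.mem_powersetCard] at hS
    refine moment_lemma k hk4 D hD4 S ?_ (by omega)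
    exact Finset.card_pos.mp (by omega)
  have hEQ : ∑ z : Fin k → Bool, D z * Q z = 0 := by
    have expand : ∀ z : Fin k → Bool, D z * Q z =
        (3/(2*r)) * (D z * (∑ S ∈ Finset.univ.powersetCard 1, ∏ i ∈ S, chiR (z i)))
        + (1/(2*(k:ℝ))) * (D z * (∑ S ∈ Finset.univ.powersetCard 2, ∏ i ∈ S, chiR (z i)))
        + (2/r^3) * (D z * (∑ S ∈ Finset.univ.powersetCard 3, ∏ i ∈ S, chiR (z i)))
        + (8/(k:ℝ)^2) * (D z * (∑ S ∈ Finset.univ.powersetCard 4, ∏ i ∈ S, chiR (z i))) := by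
      intro z; rw [hQ]; ring
    rw [Finset.sum_congr rfl fun z _ => expand z]
    rw [Finset.sum_add_distrib, Finset.sum_add_distrib, Finset.sum_add_distrib,
      ← Finset.mul_sum, ← Finset.mul_sum, ← Finset.mul_sum, ← Finset.mul_sum]
    rw [hmom 1 (by norm_num) (by norm_num), hmom 2 (by norm_num) (by norm_num),
      hmom 3 (by norm_num) (by norm_num), hmom 4 (by norm_num) (by norm_num)]
    ring
  -- pointwise bounds
  have hchi : ∀ z : Fin k → Bool,
      (∑ i, (if z i then (1:ℝ) else -1)) = ∑ i, chiR (z i) :=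
    fun z => Finset.sum_congr rfl fun i _ => rfl
  have hQlow : ∀ z : Fin k → Bool, -(14/3:ℝ) ≤ Q z := fun z => by
    rw [hQform z]; exact q_bound_all _ r hr0 hr99
  have hQpos : ∀ z : Fin k → Bool,
      (-r/2 ≤ ∑ i, (if z i then (1:ℝ) else -1)) → (25/1188:ℝ) ≤ Q z := by
    intro z hz
    rw [hQform z]
    refine q_bound_pos _ r hr0 hr99 ?_
    rw [← hchi z]
    exact hz
  -- split the mass
  set A := Finset.univ.filter
    (fun z : Fin k → Bool => -r/2 ≤ ∑ i, (if z i then (1:ℝ) else -1)) with hA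
  set B := Finset.univ.filter
    (fun z : Fin k → Bool => ¬ (-r/2 ≤ ∑ i, (if z i then (1:ℝ) else -1))) with hBdef
  have hsplitD : ∑ z ∈ A, D z + ∑ z ∈ B, D z = 1 := by
    rw [hA, hBdef, Finset.sum_filter_add_sum_filter_not]
    exact hDsum
  have hsplitQ : (∑ z ∈ A, D z * Q z) + (∑ z ∈ B, D z * Q z) = 0 := by
    rw [hA, hBdef, Finset.sum_filter_add_sum_filter_not]
    exact hEQ
  have hAbound : (25/1188:ℝ) * ∑ z ∈ A, D z ≤ ∑ z ∈ A, D z * Q z := by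
    rw [Finset.mul_sum]
    apply Finset.sum_le_sum
    intro z hz
    rw [hA, Finset.mem_filter] at hz
    calc (25/1188:ℝ) * D z = D z * (25/1188) := by ring
      _ ≤ D z * Q z := mul_le_mul_of_nonneg_left (hQpos z hz.2) (hD0 z)
  have hBbound : (-(14/3:ℝ)) * ∑ z ∈ B, D z ≤ ∑ z ∈ B, D z * Q z := by
    rw [Finset.mul_sum]
    apply Finset.sum_le_sum
    intro z hz
    calc (-(14/3:ℝ)) * D z = D z * (-(14/3)) := by ring
      _ ≤ D z * Q z := mul_le_mul_of_nonneg_left (hQlow z) (hD0 z)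
  have hBnn : (0:ℝ) ≤ ∑ z ∈ B, D z := Finset.sum_nonneg fun z _ => hD0 z
  linarith
end

section
/- Let f : ℤ_q^k → ℝ and define its Boolean version f^b : Ω_k → ℝ on the set Ω_k = {v ∈ {0,1}^{[k]×ℤ_q} : Σ_{a∈ℤ_q} v(i,a) = 1 for all i ∈ [k]} by f^b(v) = Σ_{α∈ℤ_q^k} f(α)·Π_{i∈[k]} v(i,α_i). Then the degree of f^b as a multilinear polynomial (restricted to Ω_k, using the constraints Σ_a v(i,a)=1) equals the Fourier degree of f, namely max{|σ| : f̂(σ) ≠ 0} where |σ| is the number of nonzero coordinates of σ ∈ ℤ_q^k. -/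
open Classical

section Helpers

variable {q k : ℕ} [NeZero q] {χ : ZMod q → ZMod q → ℝ}

lemma sum_fun_prod (g : Fin k → ZMod q → ℝ) :
    (∑ x : Fin k → ZMod q, ∏ i, g i (x i)) = ∏ i, ∑ a : ZMod q, g i a := by
  rw [Finset.prod_univ_sum]
  simp [Fintype.piFinset_univ]

lemma sum_chi_mul (horth : ∀ a b : ZMod q,
      (1/(q:ℝ)) * ∑ z : ZMod q, χ a z * χ b z = if a = b then 1 else 0)
    (a b : ZMod q) :
    ∑ z : ZMod q, χ a z * χ b z = if a = b then (q:ℝ) else 0 := by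
  have hq : (q:ℝ) ≠ 0 := Nat.cast_ne_zero.mpr (NeZero.ne q)
  have h2 : ∑ z : ZMod q, χ a z * χ b z
      = (q:ℝ) * ((1/(q:ℝ)) * ∑ z : ZMod q, χ a z * χ b z) := by
    field_simp
  rw [h2, horth a b]
  split <;> simp

lemma sum_chi (hχ0 : ∀ z : ZMod q, χ 0 z = 1)
    (horth : ∀ a b : ZMod q,
      (1/(q:ℝ)) * ∑ z : ZMod q, χ a z * χ b z = if a = b then 1 else 0)
    (b : ZMod q) :
    ∑ z : ZMod q, χ b z = if b = 0 then (q:ℝ) else 0 := by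
  have := sum_chi_mul horth b 0
  simpa [hχ0] using this

lemma chi_expand (b : ZMod q) (z : ZMod q) :
    χ b z = ∑ a : ZMod q, χ b a * (if z = a then (1:ℝ) else 0) := by
  simp [mul_ite, Finset.sum_ite_eq]

/-- Fourier coefficient formula. -/
lemma coeff_formula
    (horth : ∀ a b : ZMod q,
      (1/(q:ℝ)) * ∑ z : ZMod q, χ a z * χ b z = if a = b then 1 else 0)
    (f : (Fin k → ZMod q) → ℝ) (fhat : (Fin k → ZMod q) → ℝ)
    (hexp : ∀ x : Fin k → ZMod q,
      f x = ∑ σ : Fin k → ZMod q, fhat σ * ∏ i, χ (σ i) (x i))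
    (σ : Fin k → ZMod q) :
    ∑ x : Fin k → ZMod q, f x * ∏ i, χ (σ i) (x i) = (q:ℝ)^k * fhat σ := by
  have step1 : ∀ x : Fin k → ZMod q, f x * ∏ i, χ (σ i) (x i)
      = ∑ τ : Fin k → ZMod q, fhat τ * ∏ i, (χ (τ i) (x i) * χ (σ i) (x i)) := by
    intro x
    rw [hexp x, Finset.sum_mul]
    refine Finset.sum_congr rfl fun τ _ => ?_
    rw [mul_assoc, ← Finset.prod_mul_distrib]
  simp_rw [step1]
  rw [Finset.sum_comm]
  have step2 : ∀ τ : Fin k → ZMod q,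
      (∑ x : Fin k → ZMod q, fhat τ * ∏ i, (χ (τ i) (x i) * χ (σ i) (x i)))
      = fhat τ * (if τ = σ then (q:ℝ)^k else 0) := by
    intro τ
    rw [← Finset.mul_sum]
    congr 1
    rw [sum_fun_prod (fun i a => χ (τ i) a * χ (σ i) a)]
    have : ∀ i, (∑ a : ZMod q, χ (τ i) a * χ (σ i) a) = if τ i = σ i then (q:ℝ) else 0 :=
      fun i => sum_chi_mul horth (τ i) (σ i)
    simp_rw [this]
    by_cases h : τ = σ
    · subst h; simp
    · rw [if_neg h]
      obtain ⟨i, hi⟩ := Function.ne_iff.mp h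
      exact Finset.prod_eq_zero (Finset.mem_univ i) (by simp [hi])
  simp_rw [step2]
  simp only [mul_ite, mul_zero, Finset.sum_ite_eq', Finset.mem_univ, if_true]
  ring

/-- if `S` has too few elements, the correlation of its indicator product with `χ_σ` is 0 -/
lemma inner_zero (hχ0 : ∀ z : ZMod q, χ 0 z = 1)
    (horth : ∀ a b : ZMod q,
      (1/(q:ℝ)) * ∑ z : ZMod q, χ a z * χ b z = if a = b then 1 else 0)
    (σ : Fin k → ZMod q) (S : Finset (Fin k × ZMod q))
    (hS : S.card < (Finset.univ.filter (fun i : Fin k => σ i ≠ 0)).card) :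
    ∑ x : Fin k → ZMod q,
      (∏ p ∈ S, (if x p.1 = p.2 then (1:ℝ) else 0)) * ∏ i, χ (σ i) (x i) = 0 := by
  have hsub : ¬ (Finset.univ.filter (fun i : Fin k => σ i ≠ 0)) ⊆ S.image Prod.fst := by
    intro h
    have h1 := Finset.card_le_card h
    have h2 := Finset.card_image_le (s := S) (f := Prod.fst)
    omega
  obtain ⟨i0, hi0T, hi0S⟩ := Finset.not_subset.mp hsub
  have key : ∀ x : Fin k → ZMod q,
      (∏ p ∈ S, (if x p.1 = p.2 then (1:ℝ) else 0)) * ∏ i, χ (σ i) (x i)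
      = ∏ i, ((∏ p ∈ S.filter (fun p => p.1 = i), (if x i = p.2 then (1:ℝ) else 0))
          * χ (σ i) (x i)) := by
    intro x
    rw [Finset.prod_mul_distrib]
    congr 1
    rw [← Finset.prod_fiberwise_of_maps_to (fun p (_ : p ∈ S) => Finset.mem_univ p.1)
        (fun p => (if x p.1 = p.2 then (1:ℝ) else 0))]
    refine Finset.prod_congr rfl fun i _ => Finset.prod_congr rfl fun p hp => ?_
    rw [(Finset.mem_filter.mp hp).2]
  simp_rw [key]
  rw [sum_fun_prod (fun i a =>
    (∏ p ∈ S.filter (fun p => p.1 = i), (if a = p.2 then (1:ℝ) else 0)) * χ (σ i) a)]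
  refine Finset.prod_eq_zero (Finset.mem_univ i0) ?_
  have hempty : S.filter (fun p => p.1 = i0) = ∅ := by
    rw [Finset.filter_eq_empty_iff]
    intro p hp hpe
    exact hi0S (Finset.mem_image.mpr ⟨p, hp, hpe⟩)
  rw [hempty]
  simp only [Finset.prod_empty, one_mul]
  rw [sum_chi hχ0 horth]
  simp [(Finset.mem_filter.mp hi0T).2]

end Helpers


/-- for `f : ℤ_q^k → ℝ` with Fourier expansion `f = Σ_σ f̂(σ)χ_σ` in an
orthonormal basis with `χ_0 = 1`, the least degree of a multilinear polynomial in the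
indicator variables `v(i,a) = 1{z_i = a}` that agrees with `f^b` on `Ω_k` (equivalently,
represents `f(z)` via `Σ_S c_S ∏_{(i,a)∈S} 1{z_i = a}`) equals the Fourier degree of `f`,
namely `max{|σ| : f̂(σ) ≠ 0}` where `|σ|` counts nonzero coordinates of `σ`. -/
theorem boolean_version_degree (q k : ℕ) [NeZero q]
    (χ : ZMod q → ZMod q → ℝ)
    (hχ0 : ∀ z : ZMod q, χ 0 z = 1)
    (horth : ∀ a b : ZMod q,
      (1/(q:ℝ)) * ∑ z : ZMod q, χ a z * χ b z = if a = b then 1 else 0)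
    (f : (Fin k → ZMod q) → ℝ) (fhat : (Fin k → ZMod q) → ℝ)
    (hexp : ∀ x : Fin k → ZMod q,
      f x = ∑ σ : Fin k → ZMod q, fhat σ * ∏ i, χ (σ i) (x i)) :
    IsLeast {d : ℕ | ∃ c : Finset (Fin k × ZMod q) → ℝ,
        (∀ S : Finset (Fin k × ZMod q), d < S.card → c S = 0) ∧
        ∀ z : Fin k → ZMod q,
          f z = ∑ S : Finset (Fin k × ZMod q),
            c S * ∏ p ∈ S, (if z p.1 = p.2 then (1:ℝ) else 0)}
      ((Finset.univ.filter (fun σ : Fin k → ZMod q => fhat σ ≠ 0)).sup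
        (fun σ => (Finset.univ.filter (fun i : Fin k => σ i ≠ 0)).card)) := by
  classical
  set D := ((Finset.univ.filter (fun σ : Fin k → ZMod q => fhat σ ≠ 0)).sup
        (fun σ => (Finset.univ.filter (fun i : Fin k => σ i ≠ 0)).card)) with hD
  set T : (Fin k → ZMod q) → Finset (Fin k) :=
    fun σ => Finset.univ.filter (fun i : Fin k => σ i ≠ 0) with hT
  constructor
  · -- membership: construct c of degree ≤ D
    refine ⟨fun S => ∑ σ : Fin k → ZMod q, fhat σ *
        ∑ p ∈ ((T σ).pi fun _ => (Finset.univ : Finset (ZMod q))).filter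
            (fun p => (T σ).attach.image (fun x => (x.1, p x.1 x.2)) = S),
          ∏ x ∈ (T σ).attach, χ (σ x.1) (p x.1 x.2), ?_, ?_⟩
    · intro S hS
      refine Finset.sum_eq_zero fun σ _ => ?_
      by_cases hσ : fhat σ = 0
      · rw [hσ, zero_mul]
      · have hle : (T σ).card ≤ D :=
          Finset.le_sup (f := fun τ : Fin k → ZMod q =>
              (Finset.univ.filter (fun i : Fin k => τ i ≠ 0)).card)
            (Finset.mem_filter.mpr ⟨Finset.mem_univ σ, hσ⟩)
        have hempty : ((T σ).pi fun _ => (Finset.univ : Finset (ZMod q))).filter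
            (fun p => (T σ).attach.image (fun x => (x.1, p x.1 x.2)) = S) = ∅ := by
          rw [Finset.filter_eq_empty_iff]
          intro p _ heq
          have h1 := congrArg Finset.card heq
          have hcard : ((T σ).attach.image
              (fun x => (x.1, p x.1 x.2))).card = (T σ).card := by
            rw [Finset.card_image_of_injOn
              (fun x _ y _ h => Subtype.ext (congrArg Prod.fst h)), Finset.card_attach]
          rw [hcard] at h1
          exact absurd hS (not_lt.mpr (h1 ▸ hle))
        rw [hempty, Finset.sum_empty, mul_zero]
    · intro z
      have hterm : ∀ σ : Fin k → ZMod q,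
          fhat σ * ∏ i, χ (σ i) (z i)
          = ∑ p ∈ (T σ).pi (fun _ => (Finset.univ : Finset (ZMod q))),
              fhat σ * ((∏ x ∈ (T σ).attach, χ (σ x.1) (p x.1 x.2)) *
                ∏ s ∈ (T σ).attach.image (fun x => (x.1, p x.1 x.2)),
                  (if z s.1 = s.2 then (1:ℝ) else 0)) := by
        intro σ
        rw [← Finset.mul_sum]
        congr 1
        have h1 : ∏ i, χ (σ i) (z i) = ∏ i ∈ T σ, χ (σ i) (z i) := by
          refine (Finset.prod_subset (Finset.subset_univ _) fun i _ hi => ?_).symm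
          have h0 : σ i = 0 := by
            by_contra hne
            exact hi (Finset.mem_filter.mpr ⟨Finset.mem_univ i, hne⟩)
          rw [h0, hχ0]
        rw [h1,
          Finset.prod_congr rfl (fun i (_ : i ∈ T σ) =>
            chi_expand (χ := χ) (σ i) (z i)),
          Finset.prod_sum]
        refine Finset.sum_congr rfl fun p hp => ?_
        rw [Finset.prod_mul_distrib]
        congr 1
        rw [Finset.prod_image (fun x _ y _ h => Subtype.ext (congrArg Prod.fst h))]
      have expand : ∀ S : Finset (Fin k × ZMod q),
          (∑ σ : Fin k → ZMod q, fhat σ *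
            ∑ p ∈ ((T σ).pi fun _ => (Finset.univ : Finset (ZMod q))).filter
                (fun p => (T σ).attach.image (fun x => (x.1, p x.1 x.2)) = S),
              ∏ x ∈ (T σ).attach, χ (σ x.1) (p x.1 x.2))
            * ∏ s ∈ S, (if z s.1 = s.2 then (1:ℝ) else 0)
          = ∑ σ : Fin k → ZMod q,
              ∑ p ∈ ((T σ).pi fun _ => (Finset.univ : Finset (ZMod q))).filter
                  (fun p => (T σ).attach.image (fun x => (x.1, p x.1 x.2)) = S),
                fhat σ * ((∏ x ∈ (T σ).attach, χ (σ x.1) (p x.1 x.2)) *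
                  ∏ s ∈ (T σ).attach.image (fun x => (x.1, p x.1 x.2)),
                    (if z s.1 = s.2 then (1:ℝ) else 0)) := by
        intro S
        rw [Finset.sum_mul]
        refine Finset.sum_congr rfl fun σ _ => ?_
        rw [mul_assoc, Finset.sum_mul, Finset.mul_sum]
        refine Finset.sum_congr rfl fun p hp => ?_
        rw [(Finset.mem_filter.mp hp).2]
      rw [hexp z]
      calc (∑ σ : Fin k → ZMod q, fhat σ * ∏ i, χ (σ i) (z i))
          = ∑ σ : Fin k → ZMod q,
              ∑ p ∈ (T σ).pi (fun _ => (Finset.univ : Finset (ZMod q))),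
                fhat σ * ((∏ x ∈ (T σ).attach, χ (σ x.1) (p x.1 x.2)) *
                  ∏ s ∈ (T σ).attach.image (fun x => (x.1, p x.1 x.2)),
                    (if z s.1 = s.2 then (1:ℝ) else 0)) :=
            Finset.sum_congr rfl fun σ _ => hterm σ
        _ = ∑ σ : Fin k → ZMod q, ∑ S : Finset (Fin k × ZMod q),
              ∑ p ∈ ((T σ).pi fun _ => (Finset.univ : Finset (ZMod q))).filter
                  (fun p => (T σ).attach.image (fun x => (x.1, p x.1 x.2)) = S),
                fhat σ * ((∏ x ∈ (T σ).attach, χ (σ x.1) (p x.1 x.2)) *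
                  ∏ s ∈ (T σ).attach.image (fun x => (x.1, p x.1 x.2)),
                    (if z s.1 = s.2 then (1:ℝ) else 0)) :=
            Finset.sum_congr rfl fun σ _ =>
              (Finset.sum_fiberwise_of_maps_to (fun p _ => Finset.mem_univ _) _).symm
        _ = ∑ S : Finset (Fin k × ZMod q), ∑ σ : Fin k → ZMod q,
              ∑ p ∈ ((T σ).pi fun _ => (Finset.univ : Finset (ZMod q))).filter
                  (fun p => (T σ).attach.image (fun x => (x.1, p x.1 x.2)) = S),
                fhat σ * ((∏ x ∈ (T σ).attach, χ (σ x.1) (p x.1 x.2)) *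
                  ∏ s ∈ (T σ).attach.image (fun x => (x.1, p x.1 x.2)),
                    (if z s.1 = s.2 then (1:ℝ) else 0)) := Finset.sum_comm
        _ = _ := Finset.sum_congr rfl fun S _ => (expand S).symm
  · -- lower bound
    rintro d ⟨c, hdeg, hrep⟩
    refine Finset.sup_le fun σ hσ => ?_
    by_contra hlt
    push_neg at hlt
    have hσne : fhat σ ≠ 0 := (Finset.mem_filter.mp hσ).2
    have hcf := coeff_formula horth f fhat hexp σ
    have hzero : ∑ x : Fin k → ZMod q, f x * ∏ i, χ (σ i) (x i) = 0 := by
      have : ∀ x : Fin k → ZMod q, f x * ∏ i, χ (σ i) (x i)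
          = ∑ S : Finset (Fin k × ZMod q),
              c S * ((∏ p ∈ S, (if x p.1 = p.2 then (1:ℝ) else 0)) * ∏ i, χ (σ i) (x i)) := by
        intro x
        rw [hrep x, Finset.sum_mul]
        simp_rw [mul_assoc]
      simp_rw [this]
      rw [Finset.sum_comm]
      refine Finset.sum_eq_zero fun S _ => ?_
      rw [← Finset.mul_sum]
      by_cases h : d < S.card
      · rw [hdeg S h, zero_mul]
      · push_neg at h
        rw [inner_zero hχ0 horth σ S (lt_of_le_of_lt h hlt), mul_zero]
    rw [hzero] at hcf
    have hq : (q:ℝ)^k ≠ 0 := pow_ne_zero _ (Nat.cast_ne_zero.mpr (NeZero.ne q))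
    have : (q:ℝ)^k * fhat σ = 0 := hcf.symm
    exact hσne ((mul_eq_zero.mp this).resolve_left hq)
end
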